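/- arXiv:2211.02595 — 9 statements merged into one kernel-verified Lean document; each statement's English description precedes it below -/
import Mathlib

section
/- Quantitative Merle–Zaag alternative: Let τ₀ ∈ ℝ, C₀ > 0, and let ρ : (−∞, τ₀] → (0, ∞) be differentiable with lim_{τ→−∞} ρ(τ) = ∞ and −ρ(τ) ≤ 5ρ′(τ) ≤ 0. Let U₊, U₀, U₋ : (−∞, τ₀] → [0, ∞) be differentiable functions with lim_{τ→−∞}(U₊ + U₀ + U₋)(τ) = 0 which satisfy, for all τ ≤ τ₀: U₊′ ≥ U₊ − C₀ρ⁻¹(U₊ + U₀ + U₋), |U₀′| ≤ C₀ρ⁻¹(U₊ + U₀ + U₋), and U₋′ ≤ −U₋ + C₀ρ⁻¹(U₊ + U₀ + U₋). Then there exist a constant C < ∞ and τ₁ ≤ τ₀ such that either U₀(τ) + U₋(τ) ≤ Cρ(τ)⁻¹U₊(τ) for all τ ≤ τ₁ (the unstable mode is dominant), or U₋(τ) + U₊(τ) ≤ Cρ(τ)⁻¹U₀(τ) for all τ ≤ τ₁ (the neutral mode is dominant). -/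
/-!
The coefficient `ε = C₀ ρ⁻¹` tends to `0` and varies slowly: `0 ≤ ε' ≤ ε / 5`. Each of the
cones `Um > 4ε(Up + U0)`, `U0 > 10ε Up` and `Up < 10ε U0` is invariant backwards in time: at
the last point where the corresponding gap vanishes it would have to be nondecreasing to the
right, while the differential inequalities make its derivative strictly negative there. Inside
the first cone `Um` is nonincreasing, so `Um → 0` rules it out altogether and
`Um ≤ 4ε(Up + U0)`. If `U0 ≤ 10ε Up` throughout, the unstable mode dominates. Otherwise
`U0 > 10ε Up` on a half-line, and there either `Up < 10ε U0` at some point, hence on a whole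
half-line where the neutral mode dominates, or `Up ≥ 10ε U0` throughout; integrating from `-∞`
then gives `U0 ≤ 8ε Up`, which is absurd.
-/

open Set Filter Topology Real

section BackwardCalculus

variable {f f' : ℝ → ℝ} {b : ℝ}

theorem antitoneOn_Icc_of_hasDerivWithinAt_Iic
    (hf : ∀ x ≤ b, HasDerivWithinAt f (f' x) (Iic b) x) {a c : ℝ} (hc : c ≤ b)
    (hf' : ∀ x ∈ Ioo a c, f' x ≤ 0) : AntitoneOn f (Icc a c) := by
  have hsub : Icc a c ⊆ Iic b := fun x hx => hx.2.trans hc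
  refine antitoneOn_of_hasDerivWithinAt_nonpos (convex_Icc a c)
    (fun x hx => (hf x (hsub hx)).continuousWithinAt.mono hsub) ?_ (by rwa [interior_Icc])
  rw [interior_Icc]
  exact fun x hx => (hf x (hx.2.le.trans hc)).mono (Ioo_subset_Icc_self.trans hsub)

theorem pos_of_hasDerivWithinAt_Iic_le_mul
    (hf : ∀ x ≤ b, HasDerivWithinAt f (f' x) (Iic b) x) {a c k : ℝ} (hac : a ≤ c) (hc : c ≤ b)
    (hf' : ∀ x ∈ Ioo a c, f' x ≤ k * f x) (hfc : 0 < f c) : 0 < f a := by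
  have hexp (x : ℝ) : HasDerivAt (fun x => exp (-(k * x))) (exp (-(k * x)) * -k) x := by
    simpa using ((hasDerivAt_id x).const_mul k).neg.exp
  have hweighted : AntitoneOn (fun x => f x * exp (-(k * x))) (Icc a c) := by
    refine antitoneOn_Icc_of_hasDerivWithinAt_Iic
      (fun x hx => (hf x hx).mul (hexp x).hasDerivWithinAt) hc fun x hx => ?_
    nlinarith [hf' x hx, exp_pos (-(k * x))]
  have := hweighted (left_mem_Icc.2 hac) (right_mem_Icc.2 hac) hac
  exact pos_of_mul_pos_left ((mul_pos hfc (exp_pos _)).trans_le this) (exp_pos _).le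

theorem nonneg_of_hasDerivWithinAt_Iic_of_tendsto_atBot
    (hf : ∀ x ≤ b, HasDerivWithinAt f (f' x) (Iic b) x) (hf' : ∀ x < b, 0 ≤ f' x)
    (hlim : Tendsto f atBot (𝓝 0)) {x : ℝ} (hx : x ≤ b) : 0 ≤ f x := by
  refine le_of_tendsto hlim ?_
  filter_upwards [eventually_le_atBot x] with y hy
  have := antitoneOn_Icc_of_hasDerivWithinAt_Iic (fun z hz => (hf z hz).neg) hx
    (fun z hz => neg_nonpos.2 (hf' z (hz.2.trans_le hx)))
    (left_mem_Icc.2 hy) (right_mem_Icc.2 hy) hy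
  simpa using this

theorem exists_last_zero_of_continuousOn_Iic (hf : ContinuousOn f (Iic b)) (hb : 0 < f b)
    {x : ℝ} (hx : x ≤ b) (hfx : f x ≤ 0) :
    ∃ σ < b, f σ = 0 ∧ ∀ y ∈ Ioc σ b, 0 < f y := by
  set T := Iic b ∩ f ⁻¹' Iic 0
  have hT : IsClosed T := hf.preimage_isClosed_of_isClosed isClosed_Iic isClosed_Iic
  have hTbdd : BddAbove T := ⟨b, fun y hy => hy.1⟩
  have hσ : sSup T ∈ T := hT.csSup_mem ⟨x, hx, hfx⟩ hTbdd
  have hσb : sSup T < b := hσ.1.lt_of_ne fun h => (h ▸ hσ.2 : f b ≤ 0).not_gt hb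
  have hright : ∀ y ∈ Ioc (sSup T) b, 0 < f y := fun y hy =>
    not_le.1 fun hfy => hy.1.not_ge (le_csSup hTbdd ⟨hy.2, hfy⟩)
  obtain ⟨z, hz, hfz⟩ : ∃ z ∈ Icc (sSup T) b, f z = 0 :=
    intermediate_value_Icc hσb.le (hf.mono fun y hy => hy.2) ⟨hσ.2, hb.le⟩
  have hzσ : z = sSup T := le_antisymm (le_csSup hTbdd ⟨hz.2, hfz.le⟩) hz.1
  exact ⟨sSup T, hσb, hzσ ▸ hfz, hright⟩

theorem HasDerivWithinAt.nonneg_of_forall_Ioc_le {x d : ℝ}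
    (hf : HasDerivWithinAt f d (Iic b) x) (hxb : x < b)
    (hmin : ∀ y ∈ Ioc x b, f x ≤ f y) : 0 ≤ d := by
  have hmin' : IsLocalMinOn f (Icc x b) x := IsMinOn.localize fun y hy => by
    show f x ≤ f y
    rcases hy.1.eq_or_lt with rfl | hxy
    exacts [le_rfl, hmin y ⟨hxy, hy.2⟩]
  have htan : b - x ∈ posTangentConeAt (Icc x b) x :=
    sub_mem_posTangentConeAt_of_segment_subset (segment_eq_Icc hxb.le ▸ Subset.rfl)
  have := hmin'.hasFDerivWithinAt_nonneg (hf.mono Icc_subset_Iic_self).hasFDerivWithinAt htan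
  rw [ContinuousLinearMap.toSpanSingleton_apply, smul_eq_mul] at this
  exact nonneg_of_mul_nonneg_right this (sub_pos.2 hxb)

theorem pos_of_deriv_neg_at_last_zero
    (hf : ∀ x ≤ b, HasDerivWithinAt f (f' x) (Iic b) x) (hb : 0 < f b)
    (hzero : ∀ σ < b, f σ = 0 → (∀ y ∈ Ioc σ b, 0 < f y) → f' σ < 0) {x : ℝ} (hx : x ≤ b) :
    0 < f x := by
  by_contra! hfx
  obtain ⟨σ, hσb, hσ, hright⟩ :=
    exists_last_zero_of_continuousOn_Iic (fun y hy => (hf y hy).continuousWithinAt) hb hx hfx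
  exact (hzero σ hσb hσ hright).not_ge
    ((hf σ hσb.le).nonneg_of_forall_Ioc_le hσb fun y hy => hσ ▸ (hright y hy).le)

theorem tendsto_atBot_zero_of_nonneg_of_le {g : ℝ → ℝ} (hg : Tendsto g atBot (𝓝 0))
    (hf0 : ∀ x ≤ b, 0 ≤ f x) (hfg : ∀ x ≤ b, f x ≤ g x) : Tendsto f atBot (𝓝 0) :=
  tendsto_of_tendsto_of_tendsto_of_le_of_le' tendsto_const_nhds hg
    (eventually_atBot.2 ⟨b, hf0⟩) (eventually_atBot.2 ⟨b, hfg⟩)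

end BackwardCalculus

/-- The Merle–Zaag differential inequalities on `(-∞, b]`, with a coefficient `ε` of derivative
`ε'` in place of `C₀ ρ⁻¹`; the bounds on `ε'` are what `-ρ ≤ 5ρ' ≤ 0` gives for `C₀ ρ⁻¹`. -/
structure MerleZaagSystem (b : ℝ) (ε ε' Up Up' U0 U0' Um Um' : ℝ → ℝ) : Prop where
  hasDerivWithinAt_ε : ∀ τ ≤ b, HasDerivWithinAt ε (ε' τ) (Iic b) τ
  hasDerivWithinAt_up : ∀ τ ≤ b, HasDerivWithinAt Up (Up' τ) (Iic b) τ
  hasDerivWithinAt_u0 : ∀ τ ≤ b, HasDerivWithinAt U0 (U0' τ) (Iic b) τ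
  hasDerivWithinAt_um : ∀ τ ≤ b, HasDerivWithinAt Um (Um' τ) (Iic b) τ
  ε_pos : ∀ τ ≤ b, 0 < ε τ
  deriv_ε_nonneg : ∀ τ ≤ b, 0 ≤ ε' τ
  deriv_ε_le : ∀ τ ≤ b, ε' τ ≤ ε τ / 5
  up_nonneg : ∀ τ ≤ b, 0 ≤ Up τ
  u0_nonneg : ∀ τ ≤ b, 0 ≤ U0 τ
  um_nonneg : ∀ τ ≤ b, 0 ≤ Um τ
  tendsto_sum : Tendsto (fun τ => Up τ + U0 τ + Um τ) atBot (𝓝 0)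
  up_deriv_ge : ∀ τ ≤ b, Up τ - ε τ * (Up τ + U0 τ + Um τ) ≤ Up' τ
  abs_u0_deriv_le : ∀ τ ≤ b, |U0' τ| ≤ ε τ * (Up τ + U0 τ + Um τ)
  um_deriv_le : ∀ τ ≤ b, Um' τ ≤ -Um τ + ε τ * (Up τ + U0 τ + Um τ)

namespace MerleZaagSystem

variable {b : ℝ} {ε ε' Up Up' U0 U0' Um Um' : ℝ → ℝ}

theorem mono (h : MerleZaagSystem b ε ε' Up Up' U0 U0' Um Um') {c : ℝ} (hcb : c ≤ b) :
    MerleZaagSystem c ε ε' Up Up' U0 U0' Um Um' := by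
  have hIic : Iic c ⊆ Iic b := Iic_subset_Iic.2 hcb
  exact
    { hasDerivWithinAt_ε := fun τ hτ => (h.hasDerivWithinAt_ε τ (hτ.trans hcb)).mono hIic
      hasDerivWithinAt_up := fun τ hτ => (h.hasDerivWithinAt_up τ (hτ.trans hcb)).mono hIic
      hasDerivWithinAt_u0 := fun τ hτ => (h.hasDerivWithinAt_u0 τ (hτ.trans hcb)).mono hIic
      hasDerivWithinAt_um := fun τ hτ => (h.hasDerivWithinAt_um τ (hτ.trans hcb)).mono hIic
      ε_pos := fun τ hτ => h.ε_pos τ (hτ.trans hcb)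
      deriv_ε_nonneg := fun τ hτ => h.deriv_ε_nonneg τ (hτ.trans hcb)
      deriv_ε_le := fun τ hτ => h.deriv_ε_le τ (hτ.trans hcb)
      up_nonneg := fun τ hτ => h.up_nonneg τ (hτ.trans hcb)
      u0_nonneg := fun τ hτ => h.u0_nonneg τ (hτ.trans hcb)
      um_nonneg := fun τ hτ => h.um_nonneg τ (hτ.trans hcb)
      tendsto_sum := h.tendsto_sum
      up_deriv_ge := fun τ hτ => h.up_deriv_ge τ (hτ.trans hcb)
      abs_u0_deriv_le := fun τ hτ => h.abs_u0_deriv_le τ (hτ.trans hcb)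
      um_deriv_le := fun τ hτ => h.um_deriv_le τ (hτ.trans hcb) }

theorem tendsto_up (h : MerleZaagSystem b ε ε' Up Up' U0 U0' Um Um') :
    Tendsto Up atBot (𝓝 0) :=
  tendsto_atBot_zero_of_nonneg_of_le h.tendsto_sum h.up_nonneg fun τ hτ => by
    linarith [h.u0_nonneg τ hτ, h.um_nonneg τ hτ]

theorem tendsto_u0 (h : MerleZaagSystem b ε ε' Up Up' U0 U0' Um Um') :
    Tendsto U0 atBot (𝓝 0) :=
  tendsto_atBot_zero_of_nonneg_of_le h.tendsto_sum h.u0_nonneg fun τ hτ => by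
    linarith [h.up_nonneg τ hτ, h.um_nonneg τ hτ]

theorem tendsto_um (h : MerleZaagSystem b ε ε' Up Up' U0 U0' Um Um') :
    Tendsto Um atBot (𝓝 0) :=
  tendsto_atBot_zero_of_nonneg_of_le h.tendsto_sum h.um_nonneg fun τ hτ => by
    linarith [h.up_nonneg τ hτ, h.u0_nonneg τ hτ]

theorem u0_pos_of_ten_mul_ε_mul_up_lt (h : MerleZaagSystem b ε ε' Up Up' U0 U0' Um Um')
    {τ : ℝ} (hτ : τ ≤ b) (hneutral : 10 * ε τ * Up τ < U0 τ) : 0 < U0 τ :=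
  lt_of_le_of_lt (by have := h.ε_pos τ hτ; have := h.up_nonneg τ hτ; positivity) hneutral

section SmallCoefficient

variable (h : MerleZaagSystem b ε ε' Up Up' U0 U0' Um Um') (hε : ∀ τ ≤ b, ε τ ≤ 1 / 100)
include h hε

theorem deriv_um_nonpos {τ : ℝ} (hτ : τ ≤ b) (hreg : 4 * ε τ * (Up τ + U0 τ) < Um τ) :
    Um' τ ≤ 0 := by
  have := h.um_deriv_le τ hτ
  nlinarith [h.ε_pos τ hτ, hε τ hτ, h.um_nonneg τ hτ]

theorem deriv_stable_gap_neg {τ : ℝ} (hτ : τ ≤ b)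
    (hzero : Um τ = 4 * ε τ * (Up τ + U0 τ)) (hpos : 0 < Um τ) :
    Um' τ - (4 * ε' τ * (Up τ + U0 τ) + 4 * ε τ * (Up' τ + U0' τ)) < 0 := by
  have hεpos := h.ε_pos τ hτ
  have hεle := hε τ hτ
  have hup := h.up_nonneg τ hτ
  have hu0 := h.u0_nonneg τ hτ
  have hUp' := mul_le_mul_of_nonneg_left (h.up_deriv_ge τ hτ) hεpos.le
  have hU0' := mul_le_mul_of_nonneg_left (abs_le.1 (h.abs_u0_deriv_le τ hτ)).1 hεpos.le
  have hε' := mul_nonneg (h.deriv_ε_nonneg τ hτ) (add_nonneg hup hu0)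
  have hUm' := h.um_deriv_le τ hτ
  rw [hzero] at hUm' hpos
  have hX : 0 < ε τ * (Up τ + U0 τ) := by linarith
  -- with `X = ε (Up + U0)` the derivative is at most `(-3 + 12ε + 32ε²) X`
  nlinarith [mul_pos hX hεpos, mul_pos (mul_pos hX hεpos) hεpos,
    mul_le_mul_of_nonneg_left hεle hX.le, mul_le_mul_of_nonneg_left hεle (mul_pos hX hεpos).le,
    mul_nonneg hεpos.le hup]

theorem um_le {τs : ℝ} (hτs : τs ≤ b) : Um τs ≤ 4 * ε τs * (Up τs + U0 τs) := by
  by_contra! hgt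
  have hUm : 0 < Um τs := lt_of_le_of_lt (mul_nonneg (mul_nonneg zero_le_four
    (h.ε_pos τs hτs).le) (add_nonneg (h.up_nonneg τs hτs) (h.u0_nonneg τs hτs))) hgt
  have hs := h.mono hτs
  have hgap : ∀ τ ≤ τs, HasDerivWithinAt (fun τ => Um τ - 4 * ε τ * (Up τ + U0 τ))
      (Um' τ - (4 * ε' τ * (Up τ + U0 τ) + 4 * ε τ * (Up' τ + U0' τ))) (Iic τs) τ :=
    fun τ hτ => (hs.hasDerivWithinAt_um τ hτ).sub
      (((hs.hasDerivWithinAt_ε τ hτ).const_mul 4).mul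
        ((hs.hasDerivWithinAt_up τ hτ).add (hs.hasDerivWithinAt_u0 τ hτ)))
  have hstable : ∀ τ ≤ τs, 4 * ε τ * (Up τ + U0 τ) < Um τ := by
    refine fun τ hτ => sub_pos.1 (pos_of_deriv_neg_at_last_zero hgap (sub_pos.2 hgt) ?_ hτ)
    intro σ hσ hzero hright
    have hUmσ : 0 < Um σ := by
      refine pos_of_hasDerivWithinAt_Iic_le_mul (k := 0) hs.hasDerivWithinAt_um hσ.le le_rfl
        (fun x hx => ?_) hUm
      rw [zero_mul]
      exact h.deriv_um_nonpos hε (hx.2.le.trans hτs) (sub_pos.1 (hright x ⟨hx.1, hx.2.le⟩))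
    exact h.deriv_stable_gap_neg hε (hσ.le.trans hτs) (sub_eq_zero.1 hzero) hUmσ
  have := nonneg_of_hasDerivWithinAt_Iic_of_tendsto_atBot (f := fun τ => -Um τ)
    (fun τ hτ => (hs.hasDerivWithinAt_um τ hτ).neg)
    (fun τ hτ => neg_nonneg.2 (h.deriv_um_nonpos hε (hτ.le.trans hτs) (hstable τ hτ.le)))
    (by simpa using h.tendsto_um.neg) le_rfl
  linarith

theorem deriv_u0_le_of_ten_mul_ε_mul_up_lt {τ : ℝ} (hτ : τ ≤ b)
    (hreg : 10 * ε τ * Up τ < U0 τ) : U0' τ ≤ 1 / 4 * U0 τ := by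
  have hεpos := h.ε_pos τ hτ
  have hUm := mul_le_mul_of_nonneg_left (h.um_le hε hτ) hεpos.le
  have := (abs_le.1 (h.abs_u0_deriv_le τ hτ)).2
  nlinarith [hε τ hτ, h.up_nonneg τ hτ, h.u0_nonneg τ hτ, mul_nonneg hεpos.le (h.up_nonneg τ hτ),
    mul_nonneg hεpos.le (h.u0_nonneg τ hτ)]

theorem deriv_neutral_gap_neg {τ : ℝ} (hτ : τ ≤ b)
    (hzero : U0 τ = 10 * ε τ * Up τ) (hpos : 0 < U0 τ) :
    U0' τ - (10 * ε' τ * Up τ + 10 * ε τ * Up' τ) < 0 := by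
  have hεpos := h.ε_pos τ hτ
  have hεle := hε τ hτ
  have hup := h.up_nonneg τ hτ
  have hUm := mul_le_mul_of_nonneg_left (h.um_le hε hτ) hεpos.le
  have hUp' := mul_le_mul_of_nonneg_left (h.up_deriv_ge τ hτ) hεpos.le
  have hU0' := (abs_le.1 (h.abs_u0_deriv_le τ hτ)).2
  have hε' := mul_nonneg (h.deriv_ε_nonneg τ hτ) hup
  rw [hzero] at hUm hU0' hUp' hpos
  have hY : 0 < ε τ * Up τ := by linarith
  -- with `Y = ε Up` the derivative is at most `((1 + 4ε)(1 + 10ε)² - 10) Y`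
  nlinarith [mul_pos hY hεpos, mul_pos (mul_pos hY hεpos) hεpos,
    mul_le_mul_of_nonneg_left hεle hY.le, mul_le_mul_of_nonneg_left hεle (mul_pos hY hεpos).le]

theorem ten_mul_ε_mul_up_lt_u0_of_le {τs : ℝ} (hτs : τs ≤ b)
    (hneutral : 10 * ε τs * Up τs < U0 τs) {τ : ℝ} (hτ : τ ≤ τs) :
    10 * ε τ * Up τ < U0 τ := by
  have hs := h.mono hτs
  have hgap : ∀ τ ≤ τs, HasDerivWithinAt (fun τ => U0 τ - 10 * ε τ * Up τ)
      (U0' τ - (10 * ε' τ * Up τ + 10 * ε τ * Up' τ)) (Iic τs) τ :=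
    fun τ hτ => (hs.hasDerivWithinAt_u0 τ hτ).sub
      (((hs.hasDerivWithinAt_ε τ hτ).const_mul 10).mul (hs.hasDerivWithinAt_up τ hτ))
  refine sub_pos.1 (pos_of_deriv_neg_at_last_zero hgap (sub_pos.2 hneutral) ?_ hτ)
  intro σ hσ hzero hright
  have hU0σ : 0 < U0 σ := by
    refine pos_of_hasDerivWithinAt_Iic_le_mul hs.hasDerivWithinAt_u0 hσ.le le_rfl
      (fun x hx => h.deriv_u0_le_of_ten_mul_ε_mul_up_lt hε (hx.2.le.trans hτs)
        (sub_pos.1 (hright x ⟨hx.1, hx.2.le⟩))) (h.u0_pos_of_ten_mul_ε_mul_up_lt hτs hneutral)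
  exact h.deriv_neutral_gap_neg hε (hσ.le.trans hτs) (sub_eq_zero.1 hzero) hU0σ

theorem deriv_unstable_gap_neg {τ : ℝ} (hτ : τ ≤ b)
    (hzero : Up τ = 10 * ε τ * U0 τ) (hpos : 0 < U0 τ) :
    10 * ε' τ * U0 τ + 10 * ε τ * U0' τ - Up' τ < 0 := by
  have hεpos := h.ε_pos τ hτ
  have hεle := hε τ hτ
  have hu0 := h.u0_nonneg τ hτ
  have hUm := mul_le_mul_of_nonneg_left (h.um_le hε hτ) hεpos.le
  have hUp' := h.up_deriv_ge τ hτ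
  have hU0' := mul_le_mul_of_nonneg_left (abs_le.1 (h.abs_u0_deriv_le τ hτ)).2 hεpos.le
  have hε' := mul_le_mul_of_nonneg_right (h.deriv_ε_le τ hτ) hu0
  rw [hzero] at hUm hU0' hUp'
  have hZ : 0 < ε τ * U0 τ := mul_pos hεpos hpos
  -- with `Z = ε U0` the derivative is at most `((1 + 4ε)(1 + 10ε)² - 8) Z`
  nlinarith [mul_pos hZ hεpos, mul_pos (mul_pos hZ hεpos) hεpos,
    mul_le_mul_of_nonneg_left hεle hZ.le, mul_le_mul_of_nonneg_left hεle (mul_pos hZ hεpos).le]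

theorem up_lt_ten_mul_ε_mul_u0_of_le {c : ℝ} (hc : c ≤ b) (hU0 : ∀ τ ≤ c, 0 < U0 τ)
    (hdom : Up c < 10 * ε c * U0 c) {τ : ℝ} (hτ : τ ≤ c) : Up τ < 10 * ε τ * U0 τ := by
  have hs := h.mono hc
  have hgap : ∀ τ ≤ c, HasDerivWithinAt (fun τ => 10 * ε τ * U0 τ - Up τ)
      (10 * ε' τ * U0 τ + 10 * ε τ * U0' τ - Up' τ) (Iic c) τ :=
    fun τ hτ => (((hs.hasDerivWithinAt_ε τ hτ).const_mul 10).mul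
      (hs.hasDerivWithinAt_u0 τ hτ)).sub (hs.hasDerivWithinAt_up τ hτ)
  refine sub_pos.1 (pos_of_deriv_neg_at_last_zero hgap (sub_pos.2 hdom) ?_ hτ)
  intro σ hσ hzero _
  exact h.deriv_unstable_gap_neg hε (hσ.le.trans hc) (sub_eq_zero.1 hzero).symm (hU0 σ hσ.le)

theorem u0_le_half_up {c : ℝ} (hc : c ≤ b) (hreg : ∀ τ ≤ c, 10 * ε τ * U0 τ ≤ Up τ)
    {τ : ℝ} (hτ : τ ≤ c) : U0 τ ≤ Up τ / 2 := by
  have hs := h.mono hc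
  refine sub_nonneg.1 (nonneg_of_hasDerivWithinAt_Iic_of_tendsto_atBot
    (f := fun τ => Up τ / 2 - U0 τ)
    (fun τ hτ => ((hs.hasDerivWithinAt_up τ hτ).div_const 2).sub (hs.hasDerivWithinAt_u0 τ hτ))
    (fun σ hσ => ?_) (by simpa using (h.tendsto_up.div_const 2).sub h.tendsto_u0) hτ)
  have hσb := hσ.le.trans hc
  have hεpos := h.ε_pos σ hσb
  have hY : 0 ≤ ε σ * Up σ := mul_nonneg hεpos.le (h.up_nonneg σ hσb)
  have hS : ε σ * (Up σ + U0 σ + Um σ) ≤ Up σ / 3 := by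
    nlinarith [mul_le_mul_of_nonneg_left (h.um_le hε hσb) hεpos.le, hreg σ hσ.le, hε σ hσb,
      mul_le_mul_of_nonneg_left (hε σ hσb) hY, mul_le_mul_of_nonneg_left (hreg σ hσ.le) hεpos.le,
      mul_nonneg hεpos.le (h.u0_nonneg σ hσb)]
  linarith [h.up_deriv_ge σ hσb, (abs_le.1 (h.abs_u0_deriv_le σ hσb)).2]

theorem tendsto_eight_mul_ε_mul_up_sub_u0 :
    Tendsto (fun τ => 8 * ε τ * Up τ - U0 τ) atBot (𝓝 0) := by
  have hεUp : Tendsto (fun τ => 8 * ε τ * Up τ) atBot (𝓝 0) :=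
    tendsto_atBot_zero_of_nonneg_of_le (by simpa using h.tendsto_up.const_mul (8 / 100))
      (fun τ hτ => by have := h.ε_pos τ hτ; have := h.up_nonneg τ hτ; positivity)
      (fun τ hτ => by nlinarith [hε τ hτ, h.up_nonneg τ hτ])
  simpa using hεUp.sub h.tendsto_u0

theorem u0_le_eight_mul_ε_mul_up {c : ℝ} (hc : c ≤ b)
    (hreg : ∀ τ ≤ c, 10 * ε τ * U0 τ ≤ Up τ) {τ : ℝ} (hτ : τ ≤ c) :
    U0 τ ≤ 8 * ε τ * Up τ := by
  have hs := h.mono hc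
  refine sub_nonneg.1 (nonneg_of_hasDerivWithinAt_Iic_of_tendsto_atBot
    (f := fun τ => 8 * ε τ * Up τ - U0 τ)
    (fun τ hτ => (((hs.hasDerivWithinAt_ε τ hτ).const_mul 8).mul
      (hs.hasDerivWithinAt_up τ hτ)).sub (hs.hasDerivWithinAt_u0 τ hτ))
    (fun σ hσ => ?_) (h.tendsto_eight_mul_ε_mul_up_sub_u0 hε) hτ)
  have hσb := hσ.le.trans hc
  have hεpos := h.ε_pos σ hσb
  have hup := h.up_nonneg σ hσb
  have hUm := mul_le_mul_of_nonneg_left (h.um_le hε hσb) hεpos.le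
  have hU0 := mul_le_mul_of_nonneg_left (h.u0_le_half_up hε hc hreg hσ.le) hεpos.le
  have hY : 0 ≤ ε σ * Up σ := mul_nonneg hεpos.le hup
  have hS : ε σ * (Up σ + U0 σ + Um σ) ≤ 2 * (ε σ * Up σ) := by
    nlinarith [hε σ hσb, mul_le_mul_of_nonneg_left (hε σ hσb) hY,
      mul_nonneg hεpos.le (h.u0_nonneg σ hσb)]
  nlinarith [mul_le_mul_of_nonneg_left (h.up_deriv_ge σ hσb) hεpos.le,
    (abs_le.1 (h.abs_u0_deriv_le σ hσb)).2, mul_nonneg (h.deriv_ε_nonneg σ hσb) hup,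
    mul_le_mul_of_nonneg_left hS hεpos.le, mul_le_mul_of_nonneg_left (hε σ hσb) hY]

theorem u0_add_um_le_of_u0_le {τ : ℝ} (hτ : τ ≤ b) (hu0 : U0 τ ≤ 10 * ε τ * Up τ) :
    U0 τ + Um τ ≤ 15 * ε τ * Up τ := by
  have hεpos := h.ε_pos τ hτ
  nlinarith [h.um_le hε hτ, mul_le_mul_of_nonneg_left hu0 hεpos.le, hε τ hτ,
    mul_nonneg hεpos.le (h.up_nonneg τ hτ), mul_nonneg hεpos.le (h.u0_nonneg τ hτ)]

theorem um_add_up_le_of_up_le {τ : ℝ} (hτ : τ ≤ b) (hup : Up τ ≤ 10 * ε τ * U0 τ) :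
    Um τ + Up τ ≤ 15 * ε τ * U0 τ := by
  have hεpos := h.ε_pos τ hτ
  nlinarith [h.um_le hε hτ, mul_le_mul_of_nonneg_left hup hεpos.le, hε τ hτ,
    mul_nonneg hεpos.le (h.up_nonneg τ hτ), mul_nonneg hεpos.le (h.u0_nonneg τ hτ)]

theorem alternative_of_ε_le :
    (∀ τ ≤ b, U0 τ + Um τ ≤ 15 * ε τ * Up τ) ∨
      ∃ c ≤ b, ∀ τ ≤ c, Um τ + Up τ ≤ 15 * ε τ * U0 τ := by
  by_cases hunstable : ∀ τ ≤ b, U0 τ ≤ 10 * ε τ * Up τ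
  · exact Or.inl fun τ hτ => h.u0_add_um_le_of_u0_le hε hτ (hunstable τ hτ)
  push Not at hunstable
  obtain ⟨τs, hτs, hneutral⟩ := hunstable
  by_cases hmixed : ∀ τ ≤ τs, 10 * ε τ * U0 τ ≤ Up τ
  · have := h.u0_le_eight_mul_ε_mul_up hε hτs hmixed le_rfl
    nlinarith [mul_nonneg (h.ε_pos τs hτs).le (h.up_nonneg τs hτs)]
  push Not at hmixed
  obtain ⟨c, hcτs, hdom⟩ := hmixed
  have hcb := hcτs.trans hτs
  have hU0 : ∀ τ ≤ c, 0 < U0 τ := fun τ hτ => h.u0_pos_of_ten_mul_ε_mul_up_lt (hτ.trans hcb)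
    (h.ten_mul_ε_mul_up_lt_u0_of_le hε hτs hneutral (hτ.trans hcτs))
  refine Or.inr ⟨c, hcb, fun τ hτ => h.um_add_up_le_of_up_le hε (hτ.trans hcb) ?_⟩
  exact (h.up_lt_ten_mul_ε_mul_u0_of_le hε hcb hU0 hdom hτ).le

end SmallCoefficient

theorem alternative (h : MerleZaagSystem b ε ε' Up Up' U0 U0' Um Um')
    (hε : Tendsto ε atBot (𝓝 0)) :
    ∃ c ≤ b, (∀ τ ≤ c, U0 τ + Um τ ≤ 15 * ε τ * Up τ) ∨
      (∀ τ ≤ c, Um τ + Up τ ≤ 15 * ε τ * U0 τ) := by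
  obtain ⟨a, ha⟩ :=
    eventually_atBot.1 (hε.eventually (ge_mem_nhds (by norm_num : (0 : ℝ) < 1 / 100)))
  have hsmall : ∀ τ ≤ min a b, ε τ ≤ 1 / 100 := fun τ hτ => ha τ (hτ.trans (min_le_left a b))
  rcases (h.mono (min_le_right a b)).alternative_of_ε_le hsmall with hup | ⟨c, hc, hu0⟩
  · exact ⟨min a b, min_le_right a b, Or.inl hup⟩
  · exact ⟨c, hc.trans (min_le_right a b), Or.inr hu0⟩

end MerleZaagSystem

/-- **Quantitative Merle–Zaag alternative** (Proposition 2.2 of the paper, ODE form).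
Given an admissible graphical radius `ρ` (positive, tending to `∞` backwards in time,
with `-ρ ≤ 5ρ' ≤ 0`) and nonnegative differentiable functions `U₊, U₀, U₋` tending to `0`
at `-∞` satisfying the Merle–Zaag differential inequalities with coefficient `C₀ ρ⁻¹`,
either the unstable mode or the neutral mode dominates quantitatively. -/
theorem quantitative_merle_zaag_alternative
    (τ₀ C₀ : ℝ) (hC₀ : 0 < C₀)
    (ρ ρ' Up Up' U0 U0' Um Um' : ℝ → ℝ)
    (hρpos : ∀ τ ≤ τ₀, 0 < ρ τ)
    (hρderiv : ∀ τ ≤ τ₀, HasDerivWithinAt ρ (ρ' τ) (Set.Iic τ₀) τ)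
    (hρlim : Filter.Tendsto ρ Filter.atBot Filter.atTop)
    (hρ'lower : ∀ τ ≤ τ₀, -ρ τ ≤ 5 * ρ' τ)
    (hρ'upper : ∀ τ ≤ τ₀, 5 * ρ' τ ≤ 0)
    (hUpnn : ∀ τ ≤ τ₀, 0 ≤ Up τ)
    (hU0nn : ∀ τ ≤ τ₀, 0 ≤ U0 τ)
    (hUmnn : ∀ τ ≤ τ₀, 0 ≤ Um τ)
    (hUpderiv : ∀ τ ≤ τ₀, HasDerivWithinAt Up (Up' τ) (Set.Iic τ₀) τ)
    (hU0deriv : ∀ τ ≤ τ₀, HasDerivWithinAt U0 (U0' τ) (Set.Iic τ₀) τ)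
    (hUmderiv : ∀ τ ≤ τ₀, HasDerivWithinAt Um (Um' τ) (Set.Iic τ₀) τ)
    (hlim : Filter.Tendsto (fun τ => Up τ + U0 τ + Um τ) Filter.atBot (nhds 0))
    (h1 : ∀ τ ≤ τ₀, Up τ - C₀ * (ρ τ)⁻¹ * (Up τ + U0 τ + Um τ) ≤ Up' τ)
    (h2 : ∀ τ ≤ τ₀, |U0' τ| ≤ C₀ * (ρ τ)⁻¹ * (Up τ + U0 τ + Um τ))
    (h3 : ∀ τ ≤ τ₀, Um' τ ≤ -Um τ + C₀ * (ρ τ)⁻¹ * (Up τ + U0 τ + Um τ)) :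
    ∃ C : ℝ, ∃ τ₁ ≤ τ₀,
      (∀ τ ≤ τ₁, U0 τ + Um τ ≤ C * (ρ τ)⁻¹ * Up τ) ∨
      (∀ τ ≤ τ₁, Um τ + Up τ ≤ C * (ρ τ)⁻¹ * U0 τ) := by
  have hsys : MerleZaagSystem τ₀ (fun τ => C₀ * (ρ τ)⁻¹) (fun τ => C₀ * (-ρ' τ / ρ τ ^ 2))
      Up Up' U0 U0' Um Um' :=
    { hasDerivWithinAt_ε := fun τ hτ => ((hρderiv τ hτ).inv (hρpos τ hτ).ne').const_mul C₀
      hasDerivWithinAt_up := hUpderiv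
      hasDerivWithinAt_u0 := hU0deriv
      hasDerivWithinAt_um := hUmderiv
      ε_pos := fun τ hτ => mul_pos hC₀ (inv_pos.2 (hρpos τ hτ))
      deriv_ε_nonneg := fun τ hτ =>
        mul_nonneg hC₀.le (div_nonneg (by linarith [hρ'upper τ hτ]) (sq_nonneg _))
      deriv_ε_le := fun τ hτ => by
        have := hρpos τ hτ
        calc C₀ * (-ρ' τ / ρ τ ^ 2) ≤ C₀ * (ρ τ / 5 / ρ τ ^ 2) := by
              gcongr; linarith [hρ'lower τ hτ]
          _ = C₀ * (ρ τ)⁻¹ / 5 := by field_simp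
      up_nonneg := hUpnn
      u0_nonneg := hU0nn
      um_nonneg := hUmnn
      tendsto_sum := hlim
      up_deriv_ge := h1
      abs_u0_deriv_le := h2
      um_deriv_le := h3 }
  obtain ⟨τ₁, hτ₁, hdom⟩ :=
    hsys.alternative (by simpa using hρlim.inv_tendsto_atTop.const_mul C₀)
  exact ⟨15 * C₀, τ₁, hτ₁, by simpa only [mul_assoc] using hdom⟩
end

section
/- Backward-in-time absorption of the stable mode: Let τ₀ ∈ ℝ and let ε̄ : (−∞, τ₀] → (0, 1/100) be differentiable with 0 ≤ ε̄′(τ) ≤ ε̄(τ)/5 for all τ ≤ τ₀. Let U₊, U₀, U₋ : (−∞, τ₀] → [0, ∞) be differentiable with lim_{τ→−∞}(U₊ + U₀ + U₋)(τ) = 0 and satisfying, for all τ ≤ τ₀: U₊′ ≥ U₊ − ε̄(U₊ + U₀ + U₋), |U₀′| ≤ ε̄(U₊ + U₀ + U₋), and U₋′ ≤ −U₋ + ε̄(U₊ + U₀ + U₋). Then U₋(τ) ≤ 2ε̄(τ)(U₊(τ) + U₀(τ)) for all τ ≤ τ₀. -/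
/-! The defect `f = U₋ - 2ε̄(U₊ + U₀)` decreases wherever it is positive: when `U₋ > 2ε̄(U₊ + U₀)`,
the stable mode dominates and `f' ≤ -U₋/2 + O(ε̄)U₋ < 0`. A function tending to `0` at `-∞` that
decreases wherever it is positive cannot become positive, since forward in time it never crosses
any level `δ > 0` from below. -/

open Filter Set

theorem nonpos_of_hasDerivWithinAt_neg_of_pos {f f' : ℝ → ℝ} {a : ℝ}
    (hf : ∀ x ≤ a, HasDerivWithinAt f (f' x) (Iic a) x)
    (hsmall : ∀ δ > 0, ∃ᶠ x in atBot, f x ≤ δ)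
    (hneg : ∀ x ≤ a, 0 < f x → f' x < 0) :
    ∀ x ≤ a, f x ≤ 0 := by
  intro x hx
  refine le_of_forall_pos_le_add fun δ hδ => ?_
  obtain ⟨σ, hσx, hσ⟩ := frequently_atBot.mp (hsmall δ hδ) x
  have hcont : ContinuousOn f (Icc σ x) := fun y hy =>
    (hf y (hy.2.trans hx)).continuousWithinAt.mono fun t ht => ht.2.trans hx
  have hderiv : ∀ y ∈ Ico σ x, HasDerivWithinAt f (f' y) (Ici y) y := fun y hy =>
    ((hf y (hy.2.le.trans hx)).hasDerivAt (Iic_mem_nhds (hy.2.trans_le hx))).hasDerivWithinAt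
  have hbound := image_le_of_deriv_right_lt_deriv_boundary' hcont hderiv (B := fun _ => δ)
    (B' := fun _ => 0) hσ continuousOn_const (fun _ _ => hasDerivWithinAt_const _ _ _)
    (fun y hy hfy => hneg y (hy.2.le.trans hx) (hfy ▸ hδ))
  simpa using hbound ⟨hσx, le_rfl⟩

theorem stable_mode_defect_deriv_neg {e e' p p' z z' m m' : ℝ} (he : 0 < e) (he1 : e < 1 / 100)
    (he' : 0 ≤ e') (hp : 0 ≤ p) (hz : 0 ≤ z)
    (hp' : p - e * (p + z + m) ≤ p') (hz' : |z'| ≤ e * (p + z + m))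
    (hm' : m' ≤ -m + e * (p + z + m)) (hpos : 2 * e * (p + z) < m) :
    m' - (2 * e' * (p + z) + 2 * e * (p' + z')) < 0 := by
  have hS : e * (p + z + m) < m / 2 + e * m := by linarith
  have hm : 0 < m := by nlinarith
  calc m' - (2 * e' * (p + z) + 2 * e * (p' + z'))
      ≤ -m + (1 + 4 * e) * (e * (p + z + m)) - 2 * e * p := by
        nlinarith [mul_nonneg he' (add_nonneg hp hz), mul_le_mul_of_nonneg_left hp' he.le,
          mul_le_mul_of_nonneg_left (neg_le_of_abs_le hz') he.le]
    _ < -m + (1 + 4 * e) * (m / 2 + e * m) := by nlinarith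
    _ < 0 := by nlinarith [mul_pos hm (sub_pos.2 he1), mul_pos (mul_pos hm he) (sub_pos.2 he1)]

theorem stable_mode_absorption_general
    (τ₀ : ℝ) (ε ε' Up Up' U0 U0' Um Um' : ℝ → ℝ)
    (hεpos : ∀ τ ≤ τ₀, 0 < ε τ)
    (hεlt : ∀ τ ≤ τ₀, ε τ < 1 / 100)
    (hεderiv : ∀ τ ≤ τ₀, HasDerivWithinAt ε (ε' τ) (Set.Iic τ₀) τ)
    (hε'nn : ∀ τ ≤ τ₀, 0 ≤ ε' τ)
    (hUpnn : ∀ τ ≤ τ₀, 0 ≤ Up τ)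
    (hU0nn : ∀ τ ≤ τ₀, 0 ≤ U0 τ)
    (hUpderiv : ∀ τ ≤ τ₀, HasDerivWithinAt Up (Up' τ) (Set.Iic τ₀) τ)
    (hU0deriv : ∀ τ ≤ τ₀, HasDerivWithinAt U0 (U0' τ) (Set.Iic τ₀) τ)
    (hUmderiv : ∀ τ ≤ τ₀, HasDerivWithinAt Um (Um' τ) (Set.Iic τ₀) τ)
    (hlim : Filter.Tendsto (fun τ => Up τ + U0 τ + Um τ) Filter.atBot (nhds 0))
    (h1 : ∀ τ ≤ τ₀, Up τ - ε τ * (Up τ + U0 τ + Um τ) ≤ Up' τ)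
    (h2 : ∀ τ ≤ τ₀, |U0' τ| ≤ ε τ * (Up τ + U0 τ + Um τ))
    (h3 : ∀ τ ≤ τ₀, Um' τ ≤ -Um τ + ε τ * (Up τ + U0 τ + Um τ)) :
    ∀ τ ≤ τ₀, Um τ ≤ 2 * ε τ * (Up τ + U0 τ) := by
  have hdefect : ∀ τ ≤ τ₀, Um τ - 2 * ε τ * (Up τ + U0 τ) ≤ 0 := by
    refine nonpos_of_hasDerivWithinAt_neg_of_pos
      (f' := fun τ => Um' τ - (2 * ε' τ * (Up τ + U0 τ) + 2 * ε τ * (Up' τ + U0' τ)))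
      (fun τ hτ => (hUmderiv τ hτ).sub
        (((hεderiv τ hτ).const_mul 2).mul ((hUpderiv τ hτ).add (hU0deriv τ hτ))))
      (fun δ hδ => ?_)
      (fun τ hτ hpos => stable_mode_defect_deriv_neg (hεpos τ hτ) (hεlt τ hτ) (hε'nn τ hτ)
        (hUpnn τ hτ) (hU0nn τ hτ) (h1 τ hτ) (h2 τ hτ) (h3 τ hτ) (by linarith))
    refine Eventually.frequently ?_
    filter_upwards [hlim.eventually (gt_mem_nhds hδ), eventually_le_atBot τ₀] with τ hsum hτ
    nlinarith [hεpos τ hτ, hUpnn τ hτ, hU0nn τ hτ]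
  intro τ hτ
  linarith [hdefect τ hτ]

/-- **Backward-in-time absorption of the stable mode** (from the proof of Proposition 2.2).
If `ε̄ : (-∞, τ₀] → (0, 1/100)` is differentiable with `0 ≤ ε̄' ≤ ε̄/5`, and the nonnegative
differentiable functions `U₊, U₀, U₋` tend to `0` at `-∞` and satisfy the Merle–Zaag
differential inequalities with coefficient `ε̄`, then `U₋ ≤ 2ε̄(U₊ + U₀)` on `(-∞, τ₀]`. -/
theorem stable_mode_absorption
    (τ₀ : ℝ) (ε ε' Up Up' U0 U0' Um Um' : ℝ → ℝ)
    (hεpos : ∀ τ ≤ τ₀, 0 < ε τ)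
    (hεlt : ∀ τ ≤ τ₀, ε τ < 1 / 100)
    (hεderiv : ∀ τ ≤ τ₀, HasDerivWithinAt ε (ε' τ) (Set.Iic τ₀) τ)
    (hε'nn : ∀ τ ≤ τ₀, 0 ≤ ε' τ)
    (hε'le : ∀ τ ≤ τ₀, ε' τ ≤ ε τ / 5)
    (hUpnn : ∀ τ ≤ τ₀, 0 ≤ Up τ)
    (hU0nn : ∀ τ ≤ τ₀, 0 ≤ U0 τ)
    (hUmnn : ∀ τ ≤ τ₀, 0 ≤ Um τ)
    (hUpderiv : ∀ τ ≤ τ₀, HasDerivWithinAt Up (Up' τ) (Set.Iic τ₀) τ)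
    (hU0deriv : ∀ τ ≤ τ₀, HasDerivWithinAt U0 (U0' τ) (Set.Iic τ₀) τ)
    (hUmderiv : ∀ τ ≤ τ₀, HasDerivWithinAt Um (Um' τ) (Set.Iic τ₀) τ)
    (hlim : Filter.Tendsto (fun τ => Up τ + U0 τ + Um τ) Filter.atBot (nhds 0))
    (h1 : ∀ τ ≤ τ₀, Up τ - ε τ * (Up τ + U0 τ + Um τ) ≤ Up' τ)
    (h2 : ∀ τ ≤ τ₀, |U0' τ| ≤ ε τ * (Up τ + U0 τ + Um τ))
    (h3 : ∀ τ ≤ τ₀, Um' τ ≤ -Um τ + ε τ * (Up τ + U0 τ + Um τ)) :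
    ∀ τ ≤ τ₀, Um τ ≤ 2 * ε τ * (Up τ + U0 τ) :=
  stable_mode_absorption_general τ₀ ε ε' Up Up' U0 U0' Um Um' hεpos hεlt hεderiv hε'nn hUpnn hU0nn
    hUpderiv hU0deriv hUmderiv hlim h1 h2 h3
end

section
/- Neutral-mode bound when the unstable mode dominates: Let τ₀ ∈ ℝ and let ε̄ : (−∞, τ₀] → (0, 1/100) be differentiable with 0 ≤ ε̄′(τ) ≤ ε̄(τ)/5. Let U₊, U₀ : (−∞, τ₀] → [0, ∞) be differentiable with lim_{τ→−∞}U₊(τ) = lim_{τ→−∞}U₀(τ) = 0, satisfying U₊′ ≥ (1/2)U₊ − 2ε̄U₀ and |U₀′| ≤ 2ε̄(U₀ + U₊) on (−∞, τ₀], and suppose in addition that U₊(τ) > 8ε̄(τ)U₀(τ) for all τ ≤ τ₀. Then U₀(τ) ≤ 80 ε̄(τ) U₊(τ) for all τ ≤ τ₀. -/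
/-!
Both bounds are barrier arguments run from `-∞`. A function `W` with `liminf W ≤ 0` at `-∞`
whose derivative is negative wherever `W > 0` never becomes positive: started below a level
`b ∈ (0, W τ₁)`, it can never cross `b` upwards. The differential inequalities make
`U₀ - 2U₊` such a function, thanks to `U₊ > 8ε̄U₀`, and then, using `U₀ ≤ 2U₊` and `ε̄' ≥ 0`,
also `U₀ - 80ε̄U₊`.
-/

open Filter Set Topology

theorem nonpos_of_deriv_neg_of_pos {W W' : ℝ → ℝ} {τ₀ : ℝ}
    (hW : ∀ τ ≤ τ₀, HasDerivWithinAt W (W' τ) (Iic τ₀) τ)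
    (hneg : ∀ τ ≤ τ₀, 0 < W τ → W' τ < 0)
    (hlim : ∀ c > 0, ∃ᶠ τ in atBot, W τ < c) :
    ∀ τ ≤ τ₀, W τ ≤ 0 := by
  intro τ₁ hτ₁
  by_contra! hpos
  obtain ⟨σ, hσ, hστ⟩ := ((hlim _ hpos).and_eventually (eventually_lt_atBot τ₁)).exists
  obtain ⟨b, hb, hbτ⟩ := exists_between (max_lt hσ hpos)
  have hcont : ContinuousOn W (Icc σ τ₁) := fun x hx ↦
    (hW x (hx.2.trans hτ₁)).continuousWithinAt.mono
      (Icc_subset_Iic_self.trans (Iic_subset_Iic.2 hτ₁))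
  have hderiv : ∀ x ∈ Ico σ τ₁, HasDerivWithinAt W (W' x) (Ici x) x := fun x hx ↦
    ((hW x (hx.2.le.trans hτ₁)).hasDerivAt
      (Iic_mem_nhds (hx.2.trans_le hτ₁))).hasDerivWithinAt
  have hbelow : W τ₁ ≤ b :=
    image_le_of_deriv_right_lt_deriv_boundary hcont hderiv (B := fun _ ↦ b) (B' := 0)
      (le_of_max_le_left hb.le) (fun _ ↦ hasDerivAt_const _ _)
      (fun x hx hWx ↦ hneg x (hx.2.le.trans hτ₁) (hWx ▸ (le_max_right _ _).trans_lt hb))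
      ⟨hστ.le, le_rfl⟩
  exact hbτ.not_ge hbelow

theorem frequently_sub_lt_of_tendsto_zero {l : Filter ℝ} [l.NeBot] {U g : ℝ → ℝ}
    (hU : Tendsto U l (𝓝 0)) (hg : ∀ᶠ τ in l, 0 ≤ g τ) :
    ∀ c > 0, ∃ᶠ τ in l, U τ - g τ < c := fun c hc ↦
  ((hU.eventually (gt_mem_nhds hc)).and hg).mono (fun _ h ↦ by linarith [h.1, h.2]) |>.frequently

theorem neutral_sub_two_unstable_deriv_neg {ε Up Up' U0 U0' : ℝ} (hε : ε ≤ 1 / 8)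
    (hUp : 0 ≤ Up) (h1 : 1 / 2 * Up - 2 * ε * U0 ≤ Up') (h2 : U0' ≤ 2 * ε * (U0 + Up))
    (hdom : 8 * ε * U0 < Up) :
    U0' - 2 * Up' < 0 := by
  nlinarith [mul_nonneg (sub_nonneg.2 hε) hUp]

theorem neutral_sub_eighty_unstable_deriv_neg {ε ε' Up Up' U0 U0' : ℝ} (hε : 0 < ε)
    (hε₁ : ε ≤ 1 / 10) (hε' : 0 ≤ ε') (hUp : 0 ≤ Up) (hU0 : U0 ≤ 2 * Up)
    (h1 : 1 / 2 * Up - 2 * ε * U0 ≤ Up') (h2 : U0' ≤ 2 * ε * (U0 + Up))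
    (hW : 80 * (ε * Up) < U0) :
    U0' - 80 * (ε' * Up + ε * Up') < 0 := by
  have hUp_pos : 0 < Up := by nlinarith
  have hεUp_pos : 0 < ε * Up := mul_pos hε hUp_pos
  nlinarith [mul_nonneg hε' hUp, mul_le_mul_of_nonneg_left h1 hε.le,
    mul_le_mul_of_nonneg_left hU0 (by positivity : (0 : ℝ) ≤ ε * (2 + 160 * ε)),
    mul_le_mul_of_nonneg_right hε₁ hεUp_pos.le]

theorem neutral_mode_bound_when_unstable_dominant_general
    (τ₀ : ℝ) (ε ε' Up Up' U0 U0' : ℝ → ℝ)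
    (hεpos : ∀ τ ≤ τ₀, 0 < ε τ)
    (hεlt : ∀ τ ≤ τ₀, ε τ < 1 / 100)
    (hεderiv : ∀ τ ≤ τ₀, HasDerivWithinAt ε (ε' τ) (Set.Iic τ₀) τ)
    (hε'nn : ∀ τ ≤ τ₀, 0 ≤ ε' τ)
    (hUpnn : ∀ τ ≤ τ₀, 0 ≤ Up τ)
    (hUpderiv : ∀ τ ≤ τ₀, HasDerivWithinAt Up (Up' τ) (Set.Iic τ₀) τ)
    (hU0deriv : ∀ τ ≤ τ₀, HasDerivWithinAt U0 (U0' τ) (Set.Iic τ₀) τ)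
    (hU0lim : Filter.Tendsto U0 Filter.atBot (nhds 0))
    (h1 : ∀ τ ≤ τ₀, (1 / 2) * Up τ - 2 * ε τ * U0 τ ≤ Up' τ)
    (h2 : ∀ τ ≤ τ₀, |U0' τ| ≤ 2 * ε τ * (U0 τ + Up τ))
    (hdom : ∀ τ ≤ τ₀, 8 * ε τ * U0 τ < Up τ) :
    ∀ τ ≤ τ₀, U0 τ ≤ 80 * ε τ * Up τ := by
  have hU0' : ∀ τ ≤ τ₀, U0' τ ≤ 2 * ε τ * (U0 τ + Up τ) := fun τ hτ ↦ (abs_le.mp (h2 τ hτ)).2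
  have hlim {g : ℝ → ℝ} (hg : ∀ τ ≤ τ₀, 0 ≤ g τ) : ∀ c > 0, ∃ᶠ τ in atBot, U0 τ - g τ < c :=
    frequently_sub_lt_of_tendsto_zero hU0lim (eventually_atBot.2 ⟨τ₀, hg⟩)
  have hU0_le : ∀ τ ≤ τ₀, U0 τ - 2 * Up τ ≤ 0 :=
    nonpos_of_deriv_neg_of_pos (fun τ hτ ↦ (hU0deriv τ hτ).sub ((hUpderiv τ hτ).const_mul 2))
      (fun τ hτ _ ↦ neutral_sub_two_unstable_deriv_neg (by linarith [hεlt τ hτ]) (hUpnn τ hτ)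
        (h1 τ hτ) (hU0' τ hτ) (hdom τ hτ))
      (hlim fun τ hτ ↦ by linarith [hUpnn τ hτ])
  have hW_le : ∀ τ ≤ τ₀, U0 τ - 80 * (ε τ * Up τ) ≤ 0 :=
    nonpos_of_deriv_neg_of_pos
      (fun τ hτ ↦ (hU0deriv τ hτ).sub (((hεderiv τ hτ).mul (hUpderiv τ hτ)).const_mul 80))
      (fun τ hτ hW ↦ neutral_sub_eighty_unstable_deriv_neg (hεpos τ hτ)
        (by linarith [hεlt τ hτ]) (hε'nn τ hτ) (hUpnn τ hτ) (by linarith [hU0_le τ hτ])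
        (h1 τ hτ) (hU0' τ hτ) (by linarith))
      (hlim fun τ hτ ↦ by positivity [hεpos τ hτ, hUpnn τ hτ])
  intro τ hτ
  linarith [hW_le τ hτ]

/-- **Neutral-mode bound when the unstable mode dominates** ('case (2)' in the proof of
Proposition 2.2). If `ε̄ : (-∞, τ₀] → (0, 1/100)` is differentiable with `0 ≤ ε̄' ≤ ε̄/5`,
`U₊, U₀ ≥ 0` are differentiable with limit `0` at `-∞`, satisfy
`U₊' ≥ (1/2)U₊ - 2ε̄U₀` and `|U₀'| ≤ 2ε̄(U₀ + U₊)`, and `U₊ > 8ε̄U₀` on `(-∞, τ₀]`,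
then `U₀ ≤ 80 ε̄ U₊` on `(-∞, τ₀]`. -/
theorem neutral_mode_bound_when_unstable_dominant
    (τ₀ : ℝ) (ε ε' Up Up' U0 U0' : ℝ → ℝ)
    (hεpos : ∀ τ ≤ τ₀, 0 < ε τ)
    (hεlt : ∀ τ ≤ τ₀, ε τ < 1 / 100)
    (hεderiv : ∀ τ ≤ τ₀, HasDerivWithinAt ε (ε' τ) (Set.Iic τ₀) τ)
    (hε'nn : ∀ τ ≤ τ₀, 0 ≤ ε' τ)
    (hε'le : ∀ τ ≤ τ₀, ε' τ ≤ ε τ / 5)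
    (hUpnn : ∀ τ ≤ τ₀, 0 ≤ Up τ)
    (hU0nn : ∀ τ ≤ τ₀, 0 ≤ U0 τ)
    (hUpderiv : ∀ τ ≤ τ₀, HasDerivWithinAt Up (Up' τ) (Set.Iic τ₀) τ)
    (hU0deriv : ∀ τ ≤ τ₀, HasDerivWithinAt U0 (U0' τ) (Set.Iic τ₀) τ)
    (hUplim : Filter.Tendsto Up Filter.atBot (nhds 0))
    (hU0lim : Filter.Tendsto U0 Filter.atBot (nhds 0))
    (h1 : ∀ τ ≤ τ₀, (1 / 2) * Up τ - 2 * ε τ * U0 τ ≤ Up' τ)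
    (h2 : ∀ τ ≤ τ₀, |U0' τ| ≤ 2 * ε τ * (U0 τ + Up τ))
    (hdom : ∀ τ ≤ τ₀, 8 * ε τ * U0 τ < Up τ) :
    ∀ τ ≤ τ₀, U0 τ ≤ 80 * ε τ * Up τ :=
  neutral_mode_bound_when_unstable_dominant_general τ₀ ε ε' Up Up' U0 U0' hεpos hεlt hεderiv hε'nn
    hUpnn hUpderiv hU0deriv hU0lim h1 h2 hdom
end

section
/- Almost non-upward quadratic bending estimate: Let β > 0, k ≥ 1, ε ∈ (0, 1], and τ₀ ∈ ℝ. Let λ₁, …, λ_k : (−∞, τ₀] → ℝ be continuously differentiable functions with lim_{τ→−∞}λᵢ(τ) = 0 for each i, with Σ_{j=1}^{k} λⱼ(τ)² > 0 for every τ ≤ τ₀, and satisfying |λᵢ′(τ) + β⁻¹λᵢ(τ)²| < (ε²/(4βk)) Σ_{j=1}^{k} λⱼ(τ)² for every i and every τ ≤ τ₀. Then max_{1≤i≤k} λᵢ(τ) + ε · min_{1≤i≤k} λᵢ(τ) < 0 for every τ ≤ τ₀. -/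
/-!
Write `Q τ = max λᵢ(τ) + ε · min λᵢ(τ)` (`maxAddMulMin`). Where `Q τ ≥ 0`, the maximum `M` is
nonzero and every `|λⱼ(τ)| ≤ M / ε`, so the error term is at most `M² / (4β)`. Hence an index
attaining the maximum has `λᵢ' < -3M² / (4β)`, while every `λⱼ' < M² / (4β)`; comparing left
difference quotients of the maximum and the minimum, `Q` strictly increases as `τ` moves left.
Then a maximum point of `Q` on a compact interval `[a, τ]` must be `a`, which is impossible once
`Q a` is below a positive value of `Q` on `[a, τ]`; such `a` exists because `Q → 0` at `-∞`.
-/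

open Filter Topology

section LeftSlope

variable {x r : ℝ}

theorem HasDerivWithinAt.eventually_slope_lt_left {g : ℝ → ℝ} {g' : ℝ}
    (hg : HasDerivWithinAt g g' (Set.Iic x) x) (hr : g' < r) :
    ∀ᶠ y in 𝓝[<] x, slope g x y < r :=
  ((hasDerivWithinAt_iff_tendsto_slope' Set.self_notMem_Iio).1
    (hasDerivWithinAt_Iio_iff_Iic.2 hg)).eventually_lt_const hr

variable {ι : Type*} {s : Finset ι} (hs : s.Nonempty) {f : ι → ℝ → ℝ} {f' : ι → ℝ}

theorem Finset.eventually_slope_sup'_lt_left {i : ι} (hi : i ∈ s)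
    (hmax : ∀ j ∈ s, f j x ≤ f i x) (hf : HasDerivWithinAt (f i) (f' i) (Set.Iic x) x)
    (hr : f' i < r) :
    ∀ᶠ y in 𝓝[<] x, slope (fun y => s.sup' hs (f · y)) x y < r := by
  filter_upwards [hf.eventually_slope_lt_left hr, self_mem_nhdsWithin] with y hy hyx
  have hsup : s.sup' hs (f · x) = f i x :=
    le_antisymm (Finset.sup'_le hs _ hmax) (Finset.le_sup' (f · x) hi)
  refine lt_of_le_of_lt ?_ hy
  rw [slope_def_field, slope_def_field, hsup]
  exact div_le_div_of_nonpos_of_le (by linarith [Set.mem_Iio.1 hyx])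
    (by linarith [Finset.le_sup' (f · y) hi])

theorem Finset.eventually_slope_inf'_lt_left
    (hf : ∀ i ∈ s, HasDerivWithinAt (f i) (f' i) (Set.Iic x) x) (hr : ∀ i ∈ s, f' i < r) :
    ∀ᶠ y in 𝓝[<] x, slope (fun y => s.inf' hs (f · y)) x y < r := by
  have hslopes : ∀ᶠ y in 𝓝[<] x, ∀ i ∈ s, slope (f i) x y < r :=
    (Filter.eventually_all_finset s).2 fun i hi => (hf i hi).eventually_slope_lt_left (hr i hi)
  filter_upwards [hslopes, self_mem_nhdsWithin] with y hy hyx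
  have hyx : y - x < 0 := sub_neg.2 hyx
  rw [slope_def_field, div_lt_iff_of_neg hyx, lt_sub_iff_add_lt', Finset.lt_inf'_iff]
  intro i hi
  have hi' := hy i hi
  rw [slope_def_field, div_lt_iff_of_neg hyx] at hi'
  linarith [Finset.inf'_le (f · x) hi]

end LeftSlope

theorem lt_zero_of_tendsto_atBot_zero_of_nonneg_eventually_lt_left {Q : ℝ → ℝ} {τ₀ : ℝ}
    (hcont : ContinuousOn Q (Set.Iic τ₀)) (hlim : Tendsto Q atBot (𝓝 0))
    (hstep : ∀ τ ≤ τ₀, 0 ≤ Q τ → ∀ᶠ σ in 𝓝[<] τ, Q τ < Q σ) :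
    ∀ τ ≤ τ₀, Q τ < 0 := by
  intro τ hτ
  by_contra! hQτ
  obtain ⟨ρ, hQρ, hρτ⟩ := ((hstep τ hτ hQτ).and self_mem_nhdsWithin).exists
  obtain ⟨a, hQa, haρ⟩ :=
    ((hlim.eventually (gt_mem_nhds (hQτ.trans_lt hQρ))).and (eventually_le_atBot ρ)).exists
  have hρ : ρ ∈ Set.Icc a τ := ⟨haρ, (Set.mem_Iio.1 hρτ).le⟩
  obtain ⟨σ, hσ, hmax⟩ := isCompact_Icc.exists_isMaxOn ⟨ρ, hρ⟩
    (hcont.mono (Set.Icc_subset_Iic_self.trans (Set.Iic_subset_Iic.2 hτ)))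
  have haσ : a < σ := lt_of_le_of_ne hσ.1 fun h => (hQa.trans_le (h ▸ hmax hρ)).false
  have hQσ : 0 ≤ Q σ := hQτ.trans (hmax ⟨haρ.trans hρ.2, le_rfl⟩)
  obtain ⟨y, hQy, hy⟩ :=
    ((hstep σ (hσ.2.trans hτ) hQσ).and (Ioo_mem_nhdsLT haσ)).exists
  exact (hmax ⟨hy.1.le, hy.2.le.trans hσ.2⟩).not_gt hQy

section MaxAddMulMin

variable {ι : Type*} [Fintype ι] [Nonempty ι]

noncomputable def maxAddMulMin (ε : ℝ) (v : ι → ℝ) : ℝ :=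
  Finset.univ.sup' Finset.univ_nonempty v + ε * Finset.univ.inf' Finset.univ_nonempty v

theorem continuous_maxAddMulMin (ε : ℝ) : Continuous (maxAddMulMin (ι := ι) ε) :=
  (Continuous.finset_sup'_apply _ fun i _ => continuous_apply i).add
    (continuous_const.mul (Continuous.finset_inf'_apply _ fun i _ => continuous_apply i))

@[simp]
theorem maxAddMulMin_zero (ε : ℝ) : maxAddMulMin ε (0 : ι → ℝ) = 0 := by
  simp [maxAddMulMin]

theorem sum_sq_le_of_maxAddMulMin_nonneg {ε : ℝ} (hε0 : 0 < ε) (hε1 : ε ≤ 1) {v : ι → ℝ}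
    (hv : 0 ≤ maxAddMulMin ε v) :
    ∑ i, v i ^ 2 ≤ Fintype.card ι * (Finset.univ.sup' Finset.univ_nonempty v / ε) ^ 2 := by
  set M := Finset.univ.sup' Finset.univ_nonempty v
  set m := Finset.univ.inf' Finset.univ_nonempty v
  have hle_M : ∀ i, v i ≤ M := fun i => Finset.le_sup' v (Finset.mem_univ i)
  have hm_le : ∀ i, m ≤ v i := fun i => Finset.inf'_le v (Finset.mem_univ i)
  have hM : 0 ≤ M := by
    obtain ⟨i⟩ := ‹Nonempty ι›
    nlinarith [hle_M i, hm_le i, show 0 ≤ M + ε * m from hv]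
  have hbound : ∀ i, v i ^ 2 ≤ (M / ε) ^ 2 := by
    intro i
    have hM_le : M ≤ M / ε := (le_div_iff₀ hε0).2 (by nlinarith)
    have hlower : -(M / ε) ≤ m := by
      rw [neg_le, le_div_iff₀ hε0]
      linarith [show 0 ≤ M + ε * m from hv]
    exact sq_le_sq' (hlower.trans (hm_le i)) ((hle_M i).trans hM_le)
  simpa using Finset.sum_le_card_nsmul Finset.univ _ _ fun i _ => hbound i

theorem eventually_maxAddMulMin_lt_left {β ε τ : ℝ} (hβ : 0 < β) (hε0 : 0 < ε) (hε1 : ε ≤ 1)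
    {lam : ι → ℝ → ℝ} {lam' : ι → ℝ}
    (hderiv : ∀ i, HasDerivWithinAt (lam i) (lam' i) (Set.Iic τ) τ)
    (hpos : 0 < ∑ j, lam j τ ^ 2)
    (hineq : ∀ i, |lam' i + β⁻¹ * lam i τ ^ 2| <
      ε ^ 2 / (4 * β * Fintype.card ι) * ∑ j, lam j τ ^ 2)
    (hQ : 0 ≤ maxAddMulMin ε (lam · τ)) :
    ∀ᶠ σ in 𝓝[<] τ, maxAddMulMin ε (lam · τ) < maxAddMulMin ε (lam · σ) := by
  set M := Finset.univ.sup' Finset.univ_nonempty (lam · τ)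
  have hsum : ∑ j, lam j τ ^ 2 ≤ Fintype.card ι * (M / ε) ^ 2 :=
    sum_sq_le_of_maxAddMulMin_nonneg hε0 hε1 hQ
  have hM : 0 < M ^ 2 := by
    refine lt_of_le_of_ne (sq_nonneg M) fun hM0 => hpos.not_ge ?_
    rw [div_pow, ← hM0] at hsum
    simpa using hsum
  have hcard : (0 : ℝ) < Fintype.card ι := by exact_mod_cast Fintype.card_pos
  have herr : ε ^ 2 / (4 * β * Fintype.card ι) * ∑ j, lam j τ ^ 2 ≤ M ^ 2 / (4 * β) := by
    calc _ ≤ ε ^ 2 / (4 * β * Fintype.card ι) * (Fintype.card ι * (M / ε) ^ 2) := by gcongr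
      _ = M ^ 2 / (4 * β) := by field_simp
  obtain ⟨i, -, hi⟩ := Finset.exists_mem_eq_sup' Finset.univ_nonempty (lam · τ)
  have hlam'_max : lam' i < -(3 / 4) * M ^ 2 / β := by
    have := (abs_lt.1 ((hineq i).trans_le herr)).2
    rw [hi.symm] at this
    have : -(3 / 4) * M ^ 2 / β = -(β⁻¹ * M ^ 2) + M ^ 2 / (4 * β) := by field_simp; ring
    linarith
  have hlam'_all : ∀ j, lam' j < M ^ 2 / (4 * β) := fun j => by
    have := (abs_lt.1 ((hineq j).trans_le herr)).2
    have : 0 ≤ β⁻¹ * lam j τ ^ 2 := by positivity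
    linarith
  filter_upwards [Finset.eventually_slope_sup'_lt_left Finset.univ_nonempty (Finset.mem_univ i)
      (fun j _ => hi ▸ Finset.le_sup' (lam · τ) (Finset.mem_univ j)) (hderiv i) hlam'_max,
    Finset.eventually_slope_inf'_lt_left Finset.univ_nonempty (fun j _ => hderiv j)
      (fun j _ => hlam'_all j),
    self_mem_nhdsWithin] with σ hsup hinf hστ
  have hστ : σ - τ < 0 := sub_neg.2 hστ
  rw [slope_def_field, div_lt_iff_of_neg hστ] at hsup hinf
  have hεinf := mul_lt_mul_of_pos_left hinf hε0
  have hrate : 0 ≤ (τ - σ) * (M ^ 2 / β) * (3 / 4 - ε / 4) :=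
    mul_nonneg (mul_nonneg (by linarith) (by positivity)) (by linarith)
  have hsplit : -(3 / 4) * M ^ 2 / β * (σ - τ) + ε * (M ^ 2 / (4 * β) * (σ - τ)) =
      (τ - σ) * (M ^ 2 / β) * (3 / 4 - ε / 4) := by ring
  simp only [maxAddMulMin]
  linarith

end MaxAddMulMin

theorem almost_non_upward_quadratic_bending_general
    (β : ℝ) (hβ : 0 < β) (k : ℕ) (hk : 0 < k)
    (ε : ℝ) (hε0 : 0 < ε) (hε1 : ε ≤ 1) (τ₀ : ℝ)
    (lam lam' : Fin k → ℝ → ℝ)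
    (hderiv : ∀ i : Fin k, ∀ τ ≤ τ₀, HasDerivWithinAt (lam i) (lam' i τ) (Set.Iic τ₀) τ)
    (hlim : ∀ i : Fin k, Filter.Tendsto (lam i) Filter.atBot (nhds 0))
    (hpos : ∀ τ ≤ τ₀, 0 < ∑ j : Fin k, (lam j τ) ^ 2)
    (hineq : ∀ i : Fin k, ∀ τ ≤ τ₀,
      |lam' i τ + β⁻¹ * (lam i τ) ^ 2| < ε ^ 2 / (4 * β * k) * ∑ j : Fin k, (lam j τ) ^ 2) :
    ∀ τ ≤ τ₀,
      (Finset.univ.sup' (Finset.univ_nonempty_iff.mpr ⟨⟨0, hk⟩⟩) fun i => lam i τ)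
        + ε * (Finset.univ.inf' (Finset.univ_nonempty_iff.mpr ⟨⟨0, hk⟩⟩) fun i => lam i τ)
        < 0 := by
  have : Nonempty (Fin k) := ⟨⟨0, hk⟩⟩
  refine lt_zero_of_tendsto_atBot_zero_of_nonneg_eventually_lt_left
    (Q := fun τ => maxAddMulMin ε (lam · τ)) ?_ ?_ fun τ hτ =>
      eventually_maxAddMulMin_lt_left hβ hε0 hε1
        (fun i => (hderiv i τ hτ).mono (Set.Iic_subset_Iic.2 hτ)) (hpos τ hτ)
        (by simpa using fun i => hineq i τ hτ)
  · exact (continuous_maxAddMulMin ε).comp_continuousOn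
      (continuousOn_pi.2 fun i τ hτ => (hderiv i τ hτ).continuousWithinAt)
  · simpa [Function.comp_def] using
      ((continuous_maxAddMulMin ε).tendsto 0).comp (tendsto_pi_nhds.2 hlim)

/-- **Almost non-upward quadratic bending estimate** (Claim in the proof of Lemma 3.3).
If continuously differentiable functions `λ₁, …, λ_k` tend to `0` at `-∞`, have
`Σ λⱼ² > 0`, and satisfy `|λᵢ' + β⁻¹λᵢ²| < (ε²/(4βk)) Σ λⱼ²` on `(-∞, τ₀]`, then
`max λᵢ + ε·min λᵢ < 0` on `(-∞, τ₀]`. -/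
theorem almost_non_upward_quadratic_bending
    (β : ℝ) (hβ : 0 < β) (k : ℕ) (hk : 0 < k)
    (ε : ℝ) (hε0 : 0 < ε) (hε1 : ε ≤ 1) (τ₀ : ℝ)
    (lam lam' : Fin k → ℝ → ℝ)
    (hderiv : ∀ i : Fin k, ∀ τ ≤ τ₀, HasDerivWithinAt (lam i) (lam' i τ) (Set.Iic τ₀) τ)
    (hcont : ∀ i : Fin k, ContinuousOn (lam' i) (Set.Iic τ₀))
    (hlim : ∀ i : Fin k, Filter.Tendsto (lam i) Filter.atBot (nhds 0))
    (hpos : ∀ τ ≤ τ₀, 0 < ∑ j : Fin k, (lam j τ) ^ 2)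
    (hineq : ∀ i : Fin k, ∀ τ ≤ τ₀,
      |lam' i τ + β⁻¹ * (lam i τ) ^ 2| < ε ^ 2 / (4 * β * k) * ∑ j : Fin k, (lam j τ) ^ 2) :
    ∀ τ ≤ τ₀,
      (Finset.univ.sup' (Finset.univ_nonempty_iff.mpr ⟨⟨0, hk⟩⟩) fun i => lam i τ)
        + ε * (Finset.univ.inf' (Finset.univ_nonempty_iff.mpr ⟨⟨0, hk⟩⟩) fun i => lam i τ)
        < 0 :=
  almost_non_upward_quadratic_bending_general β hβ k hk ε hε0 hε1 τ₀ lam lam' hderiv hlim hpos hineq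
end

section
/- Exponential lower-bound persistence: Let c′ > 0. There exists σ* < ∞, depending only on c′, with the following property: if σ₁ ≥ σ* and α : [σ₁, ∞) → [0, ∞) is continuously differentiable with α′(σ) ≥ 2α(σ) − c′α(σ)^{3/2} − c′e^{−30σ} for all σ ≥ σ₁, and α(σ₁) ≥ e^{−20σ₁}, then α(σ) ≥ e^{−20σ} for all σ ≥ σ₁. -/
/-!
On the boundary of the region `α ≥ e^{-20σ}` the differential inequality gives
`α' ≥ 2e^{-20σ}(1 - c' e^{-10σ}) > 0 > (e^{-20σ})'` as soon as `c' e^{-10σ} < 1`, which holds for `σ ≥ c'/10` since `e^x > x`; so the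
barrier `e^{-20σ}` can never overtake `α` (Mathlib's fencing theorem
`image_le_of_deriv_right_lt_deriv_boundary'`).
-/

open Real Set

lemma mul_exp_neg_lt_one {c x : ℝ} (hcx : c ≤ x) : c * exp (-x) < 1 := by
  rw [exp_neg, ← div_eq_mul_inv, div_lt_one (exp_pos x)]
  linarith [add_one_le_exp x]

lemma neg_mul_exp_lt_of_barrier {c x : ℝ} (hcx : c ≤ 10 * x) :
    -20 * exp (-20 * x) < 2 * exp (-20 * x) - c * exp (-20 * x) ^ ((3 : ℝ) / 2)
      - c * exp (-30 * x) := by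
  have hsmall : c * exp (-(10 * x)) < 1 := mul_exp_neg_lt_one hcx
  have hpow : exp (-20 * x) ^ ((3 : ℝ) / 2) = exp (-20 * x) * exp (-(10 * x)) := by
    rw [← exp_mul, ← exp_add]; ring_nf
  have hsplit : exp (-30 * x) = exp (-20 * x) * exp (-(10 * x)) := by
    rw [← exp_add]; ring_nf
  rw [hpow, hsplit]
  nlinarith [exp_pos (-20 * x)]

lemma hasDerivAt_exp_const_mul (k x : ℝ) :
    HasDerivAt (fun y => exp (k * y)) (k * exp (k * x)) x := by
  simpa [mul_comm] using ((hasDerivAt_id x).const_mul k).exp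

theorem exponential_lower_bound_persistence_general (c' : ℝ) :
    ∃ σs : ℝ, ∀ σ₁ : ℝ, σs ≤ σ₁ → ∀ α α' : ℝ → ℝ,
      (∀ σ, σ₁ ≤ σ → 0 ≤ α σ) →
      (∀ σ, σ₁ ≤ σ → HasDerivWithinAt α (α' σ) (Set.Ici σ₁) σ) →
      ContinuousOn α' (Set.Ici σ₁) →
      (∀ σ, σ₁ ≤ σ →
        2 * α σ - c' * (α σ) ^ ((3 : ℝ) / 2) - c' * Real.exp (-30 * σ) ≤ α' σ) →
      Real.exp (-20 * σ₁) ≤ α σ₁ →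
      ∀ σ, σ₁ ≤ σ → Real.exp (-20 * σ) ≤ α σ := by
  refine ⟨c' / 10, fun σ₁ hσ₁ α α' _ hα _ hineq hinit σ hσ => ?_⟩
  have hα_cont : ContinuousOn α (Icc σ₁ σ) := fun x hx =>
    (hα x hx.1).continuousWithinAt.mono Icc_subset_Ici_self
  have hα_right : ∀ x ∈ Ico σ₁ σ, HasDerivWithinAt α (α' x) (Ici x) x := fun x hx =>
    (hα x hx.1).mono (Ici_subset_Ici.2 hx.1)
  have hbarrier : ∀ x ∈ Ico σ₁ σ, exp (-20 * x) = α x → -20 * exp (-20 * x) < α' x := by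
    intro x hx hx_eq
    have hcx : c' ≤ 10 * x := by linarith [hx.1]
    exact (neg_mul_exp_lt_of_barrier hcx).trans_le (hx_eq ▸ hineq x hx.1)
  exact image_le_of_deriv_right_lt_deriv_boundary'
    (fun x _ => (hasDerivAt_exp_const_mul (-20) x).continuousAt.continuousWithinAt)
    (fun x _ => (hasDerivAt_exp_const_mul (-20) x).hasDerivWithinAt)
    hinit hα_cont hα_right hbarrier ⟨hσ, le_rfl⟩

/-- **Exponential lower-bound persistence** (continuity/forward-invariance argument in the
proof of Lemma 3.3). For every `c' > 0` there is `σ*` such that any nonnegative `C¹`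
function `α` on `[σ₁, ∞)` with `σ₁ ≥ σ*`, satisfying
`α' ≥ 2α - c'α^{3/2} - c'e^{-30σ}` and `α(σ₁) ≥ e^{-20σ₁}`, satisfies `α(σ) ≥ e^{-20σ}`
for all `σ ≥ σ₁`. -/
theorem exponential_lower_bound_persistence (c' : ℝ) (hc' : 0 < c') :
    ∃ σs : ℝ, ∀ σ₁ : ℝ, σs ≤ σ₁ → ∀ α α' : ℝ → ℝ,
      (∀ σ, σ₁ ≤ σ → 0 ≤ α σ) →
      (∀ σ, σ₁ ≤ σ → HasDerivWithinAt α (α' σ) (Set.Ici σ₁) σ) →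
      ContinuousOn α' (Set.Ici σ₁) →
      (∀ σ, σ₁ ≤ σ →
        2 * α σ - c' * (α σ) ^ ((3 : ℝ) / 2) - c' * Real.exp (-30 * σ) ≤ α' σ) →
      Real.exp (-20 * σ₁) ≤ α σ₁ →
      ∀ σ, σ₁ ≤ σ → Real.exp (-20 * σ) ≤ α σ :=
  exponential_lower_bound_persistence_general c'
end

section
/- Riccati dichotomy with quantized limits: Let β > 0, δ > 0, and C > 0. There exists μ > 0, depending only on β, δ and C, with the following property: for every τ₀ < 0 and every continuously differentiable λ : (−∞, τ₀] → ℝ satisfying |λ(τ)| ≤ C/|τ| and |λ′(τ) + β⁻¹λ(τ)²| ≤ C|τ|^{−2−δ} for all τ ≤ τ₀, one of the following two alternatives holds: either there is C′ < ∞ such that |λ(τ) − β/τ| ≤ C′|τ|^{−1−μ} for all τ ≤ τ₀, or there is C′ < ∞ such that |λ(τ)| ≤ C′|τ|^{−1−μ} for all τ ≤ τ₀. -/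
/-!
The substitution `v s = -s * λ (-s) / β` turns the Riccati equation `λ' + β⁻¹ λ² ≈ 0` into the
perturbed logistic equation `s v' = v (1 - v) + O(s^{-δ})` on `[-τ₀, ∞)`, whose equilibria `1`
and `0` correspond to `λ = β / τ` and `λ = 0`; everything then follows from the comparison
principle with explicit barriers. If `v ≥ 1/2` at arbitrarily late times, then `v` is trapped
above `1/2` and squeezed towards `1` between `1 ± A s^{-μ}`. Otherwise `v < 1/2` eventually, and
`v` stays within `O(s^{-δ})` of `0`: once outside, it would be pushed along the barrier
`a s - c s^{-δ}` (`a < 0`) to `-∞`, or along `a √s + c s^{-δ}` (`a > 0`) above `1/2`.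
-/

open Set Filter

theorem le_of_hasDerivWithinAt_of_contact {v v' g g' : ℝ → ℝ} {a : ℝ}
    (hv : ∀ x ≥ a, HasDerivWithinAt v (v' x) (Ici a) x)
    (hg : ∀ x ≥ a, HasDerivAt g (g' x) x)
    (hstart : v a ≤ g a) (hcontact : ∀ x ≥ a, v x = g x → v' x < g' x) :
    ∀ x ≥ a, v x ≤ g x := fun _ hb =>
  image_le_of_deriv_right_lt_deriv_boundary'
    (fun x hx => (hv x hx.1).continuousWithinAt.mono Icc_subset_Ici_self)
    (fun x hx => (hv x hx.1).mono (Ici_subset_Ici.2 hx.1)) hstart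
    (fun x hx => (hg x hx.1).continuousAt.continuousWithinAt)
    (fun x hx => (hg x hx.1).hasDerivWithinAt) (fun x hx => hcontact x hx.1) ⟨hb, le_rfl⟩

theorem ge_of_hasDerivWithinAt_of_contact {v v' g g' : ℝ → ℝ} {a : ℝ}
    (hv : ∀ x ≥ a, HasDerivWithinAt v (v' x) (Ici a) x)
    (hg : ∀ x ≥ a, HasDerivAt g (g' x) x)
    (hstart : g a ≤ v a) (hcontact : ∀ x ≥ a, v x = g x → g' x < v' x) :
    ∀ x ≥ a, g x ≤ v x := fun x hx =>
  neg_le_neg_iff.1 <| le_of_hasDerivWithinAt_of_contact (v := fun x => -v x)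
    (g := fun x => -g x) (fun x hx => (hv x hx).neg) (fun x hx => (hg x hx).neg)
    (neg_le_neg hstart) (fun x hx h => neg_lt_neg (hcontact x hx (neg_inj.1 h))) x hx

theorem exists_forall_abs_le_mul_rpow_neg {f : ℝ → ℝ} {s₀ M A μ : ℝ} (hs₀ : 0 < s₀)
    (hμ : 0 ≤ μ) (hM : ∀ s ≥ s₀, |f s| ≤ M) (hA : ∀ᶠ s in atTop, |f s| ≤ A * s ^ (-μ)) :
    ∃ A', ∀ s ≥ s₀, |f s| ≤ A' * s ^ (-μ) := by
  obtain ⟨S, hS⟩ := eventually_atTop.1 hA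
  refine ⟨max A (M * S ^ μ), fun s hs => ?_⟩
  have hs0 : 0 < s := hs₀.trans_le hs
  rcases le_total S s with hSs | hsS
  · exact (hS s hSs).trans (mul_le_mul_of_nonneg_right (le_max_left _ _) (by positivity))
  · have hM0 : 0 ≤ M := (abs_nonneg _).trans (hM s hs)
    calc |f s| ≤ M := hM s hs
      _ = M * s ^ μ * s ^ (-μ) := by rw [mul_assoc, ← Real.rpow_add hs0]; simp
      _ ≤ M * S ^ μ * s ^ (-μ) := by gcongr
      _ ≤ max A (M * S ^ μ) * s ^ (-μ) := by gcongr; exact le_max_right _ _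

structure ApproxLogistic (v v' : ℝ → ℝ) (s₀ K δ : ℝ) : Prop where
  pos : 0 < s₀
  hasDerivWithinAt : ∀ s ≥ s₀, HasDerivWithinAt v (v' s) (Ici s₀) s
  abs_le_const : ∀ s ≥ s₀, |v s| ≤ K
  abs_sub_le : ∀ s ≥ s₀, |s * v' s - v s * (1 - v s)| ≤ K * s ^ (-δ)

namespace ApproxLogistic

variable {v v' : ℝ → ℝ} {s₀ K δ : ℝ}

theorem nonneg (hv : ApproxLogistic v v' s₀ K δ) : 0 ≤ K :=
  (abs_nonneg _).trans (hv.abs_le_const s₀ le_rfl)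

theorem hasDerivWithinAt_Ici (hv : ApproxLogistic v v' s₀ K δ) {a : ℝ} (ha : s₀ ≤ a) :
    ∀ x ≥ a, HasDerivWithinAt v (v' x) (Ici a) x := fun x hx =>
  (hv.hasDerivWithinAt x (ha.trans hx)).mono (Ici_subset_Ici.2 ha)

theorem mul_deriv_le (hv : ApproxLogistic v v' s₀ K δ) {s : ℝ} (hs : s₀ ≤ s) :
    s * v' s ≤ v s * (1 - v s) + K * s ^ (-δ) := by
  linarith [(abs_le.1 (hv.abs_sub_le s hs)).2]

theorem le_mul_deriv (hv : ApproxLogistic v v' s₀ K δ) {s : ℝ} (hs : s₀ ≤ s) :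
    v s * (1 - v s) - K * s ^ (-δ) ≤ s * v' s := by
  linarith [(abs_le.1 (hv.abs_sub_le s hs)).1]

theorem half_le_of_half_le (hv : ApproxLogistic v v' s₀ K δ) {s₁ : ℝ} (hs₁ : s₀ ≤ s₁)
    (hK : ∀ s ≥ s₁, K * s ^ (-δ) < 1 / 4) (h : 1 / 2 ≤ v s₁) : ∀ s ≥ s₁, 1 / 2 ≤ v s := by
  refine ge_of_hasDerivWithinAt_of_contact (hv.hasDerivWithinAt_Ici hs₁)
    (fun x _ => hasDerivAt_const x (1 / 2 : ℝ)) h fun x hx hvx => ?_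
  refine lt_of_mul_lt_mul_left ?_ (hv.pos.trans_le (hs₁.trans hx)).le
  have := hv.le_mul_deriv (hs₁.trans hx)
  rw [hvx] at this
  linarith [hK x hx]

theorem le_one_add_mul_rpow (hv : ApproxLogistic v v' s₀ K δ) {s₁ μ A : ℝ} (hs₁ : s₀ ≤ s₁)
    (h1 : 1 ≤ s₁) (hμδ : μ ≤ δ) (hμ : μ ≤ 1 / 4) (hA : 4 * K + 1 ≤ A)
    (hstart : v s₁ ≤ 1 + A * s₁ ^ (-μ)) : ∀ s ≥ s₁, v s ≤ 1 + A * s ^ (-μ) := by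
  have hpos : ∀ x ≥ s₁, 0 < x := fun x hx => hv.pos.trans_le (hs₁.trans hx)
  refine le_of_hasDerivWithinAt_of_contact (hv.hasDerivWithinAt_Ici hs₁)
    (fun x hx => ((Real.hasDerivAt_rpow_const (Or.inl (hpos x hx).ne')).const_mul A).const_add 1)
    hstart fun x hx hvx => ?_
  have hx0 := hpos x hx
  refine lt_of_mul_lt_mul_left ?_ hx0.le
  have hderiv : x * (A * (-μ * x ^ (-μ - 1))) = -μ * A * x ^ (-μ) := by
    rw [Real.rpow_sub_one hx0.ne']; field_simp
  set P := x ^ (-μ)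
  have hP : 0 < P := by positivity
  have hδP : x ^ (-δ) ≤ P := Real.rpow_le_rpow_of_exponent_le (h1.trans hx) (neg_le_neg hμδ)
  have hrate : 0 < (A * (1 - μ) - K) * P := mul_pos (by nlinarith [hv.nonneg]) hP
  have := hv.mul_deriv_le (hs₁.trans hx)
  rw [hvx] at this
  nlinarith [mul_le_mul_of_nonneg_left hδP hv.nonneg, mul_pos (by linarith [hv.nonneg] : 0 < A) hP]

theorem one_sub_mul_rpow_le (hv : ApproxLogistic v v' s₀ K δ) {s₁ μ A : ℝ} (hs₁ : s₀ ≤ s₁)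
    (h1 : 1 ≤ s₁) (hμδ : μ ≤ δ) (hμ : μ ≤ 1 / 4) (hA : 4 * K + 1 ≤ A)
    (htrap : ∀ s ≥ s₁, 1 / 2 ≤ v s) (hstart : 1 - A * s₁ ^ (-μ) ≤ v s₁) :
    ∀ s ≥ s₁, 1 - A * s ^ (-μ) ≤ v s := by
  have hpos : ∀ x ≥ s₁, 0 < x := fun x hx => hv.pos.trans_le (hs₁.trans hx)
  refine ge_of_hasDerivWithinAt_of_contact (hv.hasDerivWithinAt_Ici hs₁)
    (fun x hx => ((Real.hasDerivAt_rpow_const (Or.inl (hpos x hx).ne')).const_mul A).const_sub 1)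
    hstart fun x hx hvx => ?_
  have hhalf := htrap x hx
  have hx0 := hpos x hx
  refine lt_of_mul_lt_mul_left ?_ hx0.le
  have hderiv : x * -(A * (-μ * x ^ (-μ - 1))) = μ * A * x ^ (-μ) := by
    rw [Real.rpow_sub_one hx0.ne']; field_simp
  set P := x ^ (-μ)
  have hP : 0 < P := by positivity
  have hδP : x ^ (-δ) ≤ P := Real.rpow_le_rpow_of_exponent_le (h1.trans hx) (neg_le_neg hμδ)
  have hrate : 0 < (A * (1 / 2 - μ) - K) * P := mul_pos (by nlinarith [hv.nonneg]) hP
  have hAP : A * P ≤ 1 / 2 := by linarith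
  have := hv.le_mul_deriv (hs₁.trans hx)
  rw [hvx] at this
  nlinarith [mul_le_mul_of_nonneg_left hδP hv.nonneg, mul_pos (by linarith [hv.nonneg] : 0 < A) hP]

theorem exists_eventually_abs_sub_one_le (hv : ApproxLogistic v v' s₀ K δ) (hδ : 0 < δ)
    {μ : ℝ} (hμδ : μ ≤ δ) (hμ : μ ≤ 1 / 4) (h : ∃ᶠ s in atTop, 1 / 2 ≤ v s) :
    ∃ A, ∀ᶠ s in atTop, |v s - 1| ≤ A * s ^ (-μ) := by
  have hsmall : ∀ᶠ s in atTop, K * s ^ (-δ) < 1 / 4 := by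
    simpa using ((tendsto_rpow_neg_atTop hδ).const_mul K).eventually_lt_const (by norm_num)
  obtain ⟨S, hS⟩ := eventually_atTop.1 (hsmall.and (eventually_ge_atTop (max s₀ 1)))
  obtain ⟨s₁, hvs₁, hSs₁⟩ := (h.and_eventually (eventually_ge_atTop S)).exists
  have hs₁ : max s₀ 1 ≤ s₁ := (hS s₁ hSs₁).2
  have htrap := hv.half_le_of_half_le (le_of_max_le_left hs₁)
    (fun s hs => (hS s (hSs₁.trans hs)).1) hvs₁
  set A := max (4 * K + 1) ((K + 1) * s₁ ^ μ)
  have hAs₁ : K + 1 ≤ A * s₁ ^ (-μ) := by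
    have hs₁0 : 0 < s₁ := hv.pos.trans_le (le_of_max_le_left hs₁)
    calc K + 1 = (K + 1) * s₁ ^ μ * s₁ ^ (-μ) := by
          rw [mul_assoc, ← Real.rpow_add hs₁0]; simp
      _ ≤ A * s₁ ^ (-μ) := by gcongr; exact le_max_right _ _
  have hvK := abs_le.1 (hv.abs_le_const s₁ (le_of_max_le_left hs₁))
  have hup := hv.le_one_add_mul_rpow (le_of_max_le_left hs₁) (le_of_max_le_right hs₁) hμδ hμ
    (le_max_left _ _) (by linarith)
  have hlo := hv.one_sub_mul_rpow_le (le_of_max_le_left hs₁) (le_of_max_le_right hs₁) hμδ hμ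
    (le_max_left _ _) htrap (by linarith)
  exact ⟨A, eventually_atTop.2 ⟨s₁, fun s hs =>
    abs_sub_le_iff.2 ⟨by linarith [hup s hs], by linarith [hlo s hs]⟩⟩⟩

theorem neg_mul_rpow_le (hv : ApproxLogistic v v' s₀ K δ) (hδ : 0 ≤ δ) :
    ∀ s ≥ s₀, -((K + 1) * s ^ (-δ)) ≤ v s := by
  intro s₂ hs₂
  by_contra! hlt
  have hpos : ∀ x ≥ s₂, 0 < x := fun x hx => hv.pos.trans_le (hs₂.trans hx)
  set a := (v s₂ + (K + 1) * s₂ ^ (-δ)) / s₂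
  have ha : a < 0 := div_neg_of_neg_of_pos (by linarith) (hpos s₂ le_rfl)
  have hbarrier : ∀ x ≥ s₂, v x ≤ a * x - (K + 1) * x ^ (-δ) := by
    refine le_of_hasDerivWithinAt_of_contact (hv.hasDerivWithinAt_Ici hs₂)
      (fun x hx => ((hasDerivAt_id x).const_mul a).sub
        ((Real.hasDerivAt_rpow_const (Or.inl (hpos x hx).ne')).const_mul (K + 1)))
      (by simp only [a, div_mul_cancel₀ _ (hpos s₂ le_rfl).ne']; linarith) fun x hx hvx => ?_
    have hx0 := hpos x hx
    refine lt_of_mul_lt_mul_left ?_ hx0.le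
    have hderiv : x * (a * 1 - (K + 1) * (-δ * x ^ (-δ - 1))) = a * x + δ * (K + 1) * x ^ (-δ) := by
      rw [Real.rpow_sub_one hx0.ne']; field_simp; ring
    have := hv.mul_deriv_le (hs₂.trans hx)
    rw [hderiv]
    nlinarith [sq_nonneg (v x), mul_nonneg (mul_nonneg hδ (by linarith [hv.nonneg] : (0:ℝ) ≤ K + 1))
      (Real.rpow_pos_of_pos hx0 (-δ)).le, Real.rpow_pos_of_pos hx0 (-δ)]
  obtain ⟨x, hax, hx⟩ : ∃ x, a * x < -K ∧ s₂ ≤ x :=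
    (((tendsto_id.const_mul_atTop_of_neg ha).eventually_lt_atBot (-K)).and
      (eventually_ge_atTop s₂)).exists
  have hx0 := hpos x hx
  linarith [hbarrier x hx, (abs_le.1 (hv.abs_le_const x (hs₂.trans hx))).1,
    mul_pos (by linarith [hv.nonneg] : (0:ℝ) < K + 1) (Real.rpow_pos_of_pos hx0 (-δ))]

theorem le_mul_rpow_of_lt_half (hv : ApproxLogistic v v' s₀ K δ) (hδ : 0 ≤ δ) {T : ℝ} (hT : s₀ ≤ T)
    (h : ∀ s ≥ T, v s < 1 / 2) : ∀ s ≥ T, v s ≤ 2 * (K + 1) * s ^ (-δ) := by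
  intro s₂ hs₂
  by_contra! hlt
  have hpos : ∀ x ≥ s₂, 0 < x := fun x hx => hv.pos.trans_le (hT.trans (hs₂.trans hx))
  set a := (v s₂ - 2 * (K + 1) * s₂ ^ (-δ)) / √s₂
  have hsqrt : 0 < √s₂ := Real.sqrt_pos.2 (hpos s₂ le_rfl)
  have ha : 0 < a := div_pos (by linarith) hsqrt
  have hbarrier : ∀ x ≥ s₂, a * √x + 2 * (K + 1) * x ^ (-δ) ≤ v x := by
    refine ge_of_hasDerivWithinAt_of_contact (hv.hasDerivWithinAt_Ici (hT.trans hs₂))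
      (fun x hx => ((Real.hasDerivAt_sqrt (hpos x hx).ne').const_mul a).add
        ((Real.hasDerivAt_rpow_const (Or.inl (hpos x hx).ne')).const_mul (2 * (K + 1))))
      (by simp only [a, div_mul_cancel₀ _ hsqrt.ne']; linarith) fun x hx hvx => ?_
    have hx0 := hpos x hx
    refine lt_of_mul_lt_mul_left ?_ hx0.le
    have hderiv : x * (a * (1 / (2 * √x)) + 2 * (K + 1) * (-δ * x ^ (-δ - 1))) =
        a * √x / 2 - 2 * δ * (K + 1) * x ^ (-δ) := by
      rw [Real.rpow_sub_one hx0.ne']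
      field_simp
      linear_combination (-a) * Real.mul_self_sqrt hx0.le
    have hY := Real.rpow_pos_of_pos hx0 (-δ)
    have hvpos : 0 < v x := by
      rw [hvx]
      exact add_pos (mul_pos ha (Real.sqrt_pos.2 hx0)) (mul_pos (by linarith [hv.nonneg]) hY)
    have hvhalf := h x (hs₂.trans hx)
    have := hv.le_mul_deriv (hT.trans (hs₂.trans hx))
    rw [hderiv]
    nlinarith [mul_nonneg (mul_nonneg hδ (by linarith [hv.nonneg] : (0:ℝ) ≤ K + 1)) hY.le]
  obtain ⟨x, hax, hx⟩ := (((Real.tendsto_sqrt_atTop.const_mul_atTop ha).eventually_gt_atTop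
    (1 / 2)).and (eventually_ge_atTop s₂)).exists
  linarith [hbarrier x hx, h x (hs₂.trans hx),
    mul_pos (by linarith [hv.nonneg] : (0:ℝ) < 2 * (K + 1)) (Real.rpow_pos_of_pos (hpos x hx) (-δ))]

theorem eventually_abs_le_of_eventually_lt_half (hv : ApproxLogistic v v' s₀ K δ) (hδ : 0 ≤ δ)
    (h : ∀ᶠ s in atTop, v s < 1 / 2) : ∀ᶠ s in atTop, |v s| ≤ 2 * (K + 1) * s ^ (-δ) := by
  obtain ⟨T, hT⟩ := eventually_atTop.1 (h.and (eventually_ge_atTop s₀))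
  have hup := hv.le_mul_rpow_of_lt_half hδ (hT T le_rfl).2 fun s hs => (hT s hs).1
  filter_upwards [eventually_ge_atTop T] with s hs
  have hY := Real.rpow_pos_of_pos (hv.pos.trans_le (hT s hs).2) (-δ)
  exact abs_le.2 ⟨by nlinarith [hv.neg_mul_rpow_le hδ s (hT s hs).2, hv.nonneg], hup s hs⟩

theorem dichotomy (hv : ApproxLogistic v v' s₀ K δ) (hδ : 0 < δ) {μ : ℝ} (hμ0 : 0 ≤ μ)
    (hμδ : μ ≤ δ) (hμ : μ ≤ 1 / 4) :
    (∃ A, ∀ s ≥ s₀, |v s - 1| ≤ A * s ^ (-μ)) ∨ (∃ A, ∀ s ≥ s₀, |v s| ≤ A * s ^ (-μ)) := by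
  by_cases h : ∃ᶠ s in atTop, 1 / 2 ≤ v s
  · obtain ⟨A, hA⟩ := hv.exists_eventually_abs_sub_one_le hδ hμδ hμ h
    refine Or.inl (exists_forall_abs_le_mul_rpow_neg hv.pos hμ0 (M := K + 1) (fun s hs => ?_) hA)
    linarith [abs_sub (v s) 1, hv.abs_le_const s hs, abs_one (α := ℝ)]
  · have hlt : ∀ᶠ s in atTop, v s < 1 / 2 := by simpa only [not_frequently, not_le] using h
    refine Or.inr (exists_forall_abs_le_mul_rpow_neg hv.pos hμ0 hv.abs_le_const
      (A := 2 * (K + 1)) ?_)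
    filter_upwards [hv.eventually_abs_le_of_eventually_lt_half hδ.le hlt, eventually_ge_atTop 1] with s hs h1
    exact hs.trans (mul_le_mul_of_nonneg_left
      (Real.rpow_le_rpow_of_exponent_le h1 (neg_le_neg hμδ)) (by linarith [hv.nonneg]))

end ApproxLogistic

theorem approxLogistic_of_riccati {β δ C τ₀ : ℝ} {lam lam' : ℝ → ℝ} (hβ : 0 < β)
    (hτ₀ : τ₀ < 0) (hderiv : ∀ τ ≤ τ₀, HasDerivWithinAt lam (lam' τ) (Iic τ₀) τ)
    (hbound : ∀ τ ≤ τ₀, |lam τ| ≤ C / |τ|)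
    (hODE : ∀ τ ≤ τ₀, |lam' τ + β⁻¹ * lam τ ^ 2| ≤ C * |τ| ^ (-(2 : ℝ) - δ)) :
    ApproxLogistic (fun s => -s * lam (-s) / β) (fun s => (s * lam' (-s) - lam (-s)) / β)
      (-τ₀) (C / β) δ where
  pos := neg_pos.2 hτ₀
  hasDerivWithinAt s hs := by
    have hmaps : MapsTo Neg.neg (Ici (-τ₀)) (Iic τ₀) := fun _ hx => mem_Iic.2 (neg_le.1 hx)
    have hcomp := (hderiv (-s) (neg_le.1 hs)).comp s (hasDerivAt_neg s).hasDerivWithinAt hmaps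
    exact (((hasDerivAt_neg s).hasDerivWithinAt.mul hcomp).div_const β).congr_deriv
      (by simp only [Function.comp_apply]; ring)
  abs_le_const s hs := by
    have hs0 : 0 < s := (neg_pos.2 hτ₀).trans_le hs
    have hb := hbound (-s) (neg_le.1 hs)
    rw [abs_neg, abs_of_pos hs0, le_div_iff₀ hs0] at hb
    rw [abs_div, abs_mul, abs_neg, abs_of_pos hs0, abs_of_pos hβ]
    gcongr
    linarith
  abs_sub_le s hs := by
    have hs0 : 0 < s := (neg_pos.2 hτ₀).trans_le hs
    have hE := hODE (-s) (neg_le.1 hs)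
    rw [abs_neg, abs_of_pos hs0] at hE
    have hid : s * ((s * lam' (-s) - lam (-s)) / β) - -s * lam (-s) / β * (1 - -s * lam (-s) / β)
        = s ^ 2 / β * (lam' (-s) + β⁻¹ * lam (-s) ^ 2) := by
      field_simp; ring
    have hpow : s ^ 2 * s ^ (-(2 : ℝ) - δ) = s ^ (-δ) := by
      rw [show -(2 : ℝ) - δ = -δ - 2 by ring, Real.rpow_sub hs0, Real.rpow_two]
      field_simp
    calc _ = s ^ 2 / β * |lam' (-s) + β⁻¹ * lam (-s) ^ 2| := by
          rw [hid, abs_mul, abs_of_pos (by positivity)]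
      _ ≤ s ^ 2 / β * (C * s ^ (-(2 : ℝ) - δ)) := by gcongr
      _ = C / β * s ^ (-δ) := by rw [← hpow]; ring

theorem abs_sub_div_le_of_approxLogistic {β τ₀ c A μ : ℝ} {lam : ℝ → ℝ} (hβ : 0 < β)
    (hτ₀ : τ₀ < 0) (h : ∀ s ≥ -τ₀, |-s * lam (-s) / β - c| ≤ A * s ^ (-μ)) :
    ∀ τ ≤ τ₀, |lam τ - β * c / τ| ≤ β * A * |τ| ^ (-(1 : ℝ) - μ) := by
  intro τ hτ
  have hτ0 : τ < 0 := hτ.trans_lt hτ₀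
  have hτne := hτ0.ne
  have hτA := h (-τ) (neg_le_neg hτ)
  rw [neg_neg] at hτA
  have hid : lam τ - β * c / τ = β / τ * (τ * lam τ / β - c) := by
    field_simp
  rw [hid, abs_mul, abs_div, abs_of_pos hβ, abs_of_neg hτ0, show -(1 : ℝ) - μ = -μ - 1 by ring,
    Real.rpow_sub_one (neg_pos.2 hτ0).ne']
  calc β / -τ * |τ * lam τ / β - c| ≤ β / -τ * (A * (-τ) ^ (-μ)) := by
        gcongr
        exact (div_pos hβ (neg_pos.2 hτ0)).le
    _ = β * A * ((-τ) ^ (-μ) / -τ) := by ring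

theorem riccati_dichotomy_quantized_general
    (β δ C : ℝ) (hβ : 0 < β) (hδ : 0 < δ) :
    ∃ μ : ℝ, 0 < μ ∧ ∀ τ₀ : ℝ, τ₀ < 0 → ∀ lam lam' : ℝ → ℝ,
      (∀ τ ≤ τ₀, HasDerivWithinAt lam (lam' τ) (Set.Iic τ₀) τ) →
      ContinuousOn lam' (Set.Iic τ₀) →
      (∀ τ ≤ τ₀, |lam τ| ≤ C / |τ|) →
      (∀ τ ≤ τ₀, |lam' τ + β⁻¹ * (lam τ) ^ 2| ≤ C * |τ| ^ (-(2 : ℝ) - δ)) →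
      (∃ C' : ℝ, ∀ τ ≤ τ₀, |lam τ - β / τ| ≤ C' * |τ| ^ (-(1 : ℝ) - μ)) ∨
      (∃ C' : ℝ, ∀ τ ≤ τ₀, |lam τ| ≤ C' * |τ| ^ (-(1 : ℝ) - μ)) := by
  refine ⟨min δ (1 / 4), lt_min hδ (by norm_num), fun τ₀ hτ₀ lam lam' hderiv _ hbound hODE => ?_⟩
  have hv := approxLogistic_of_riccati hβ hτ₀ hderiv hbound hODE
  rcases hv.dichotomy hδ (le_min hδ.le (by norm_num)) (min_le_left _ _) (min_le_right _ _)
    with ⟨A, hA⟩ | ⟨A, hA⟩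
  · exact Or.inl ⟨β * A, by simpa using abs_sub_div_le_of_approxLogistic (c := 1) hβ hτ₀ hA⟩
  · exact Or.inr ⟨β * A, by
      simpa using abs_sub_div_le_of_approxLogistic (c := 0) hβ hτ₀ (by simpa using hA)⟩

/-- **Riccati dichotomy with quantized limits** (scalar ODE dichotomy, following
Filippas–Liu, used in the proof of the spectral quantization theorem). For `β, δ, C > 0`
there is `μ > 0` such that any `C¹` function `λ` on `(-∞, τ₀]` (with `τ₀ < 0`) satisfying
`|λ(τ)| ≤ C/|τ|` and `|λ' + β⁻¹λ²| ≤ C|τ|^{-2-δ}` is asymptotic either to `β/τ` or to `0`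
with error `O(|τ|^{-1-μ})`. -/
theorem riccati_dichotomy_quantized
    (β δ C : ℝ) (hβ : 0 < β) (hδ : 0 < δ) (hC : 0 < C) :
    ∃ μ : ℝ, 0 < μ ∧ ∀ τ₀ : ℝ, τ₀ < 0 → ∀ lam lam' : ℝ → ℝ,
      (∀ τ ≤ τ₀, HasDerivWithinAt lam (lam' τ) (Set.Iic τ₀) τ) →
      ContinuousOn lam' (Set.Iic τ₀) →
      (∀ τ ≤ τ₀, |lam τ| ≤ C / |τ|) →
      (∀ τ ≤ τ₀, |lam' τ + β⁻¹ * (lam τ) ^ 2| ≤ C * |τ| ^ (-(2 : ℝ) - δ)) →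
      (∃ C' : ℝ, ∀ τ ≤ τ₀, |lam τ - β / τ| ≤ C' * |τ| ^ (-(1 : ℝ) - μ)) ∨
      (∃ C' : ℝ, ∀ τ ≤ τ₀, |lam τ| ≤ C' * |τ| ^ (-(1 : ℝ) - μ)) :=
  riccati_dichotomy_quantized_general β δ C hβ hδ
end

section
/- Rotation vector fields tangent to a cylinder are standard sphere rotations (Lemma A.1, cylindrical case): Let 1 ≤ k ≤ n−1 and N = (n−k+1)(n−k)/2. Regard so(n−k+1) as the subspace of so(n+1) of antisymmetric (n+1)×(n+1) matrices of block form diag(0_{k×k}, J̄) with J̄ ∈ so(n−k+1), and equip so(n+1) with the Frobenius inner product ⟨A,B⟩ = tr(AᵀB). Let {J_α}_{α=1}^{N} be an orthonormal basis of this subspace, let S ∈ O(n+1), q ∈ ℝ^{n+1}, and define K_α(x) = S J_α S⁻¹(x − q). Let Γ = {(y,ω) : y ∈ ℝ^k, ω ∈ S^{n−k}} ⊂ ℝ^{n+1} be the cylinder of unit radius with outward unit normal ν(y,ω) = (0,ω), and let p ∈ Γ. Suppose: (i) ⟨K_α(x), ν(x)⟩ = 0 for every α and every x ∈ Γ with |x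 − p| < 1; (ii) |K_α(x)|·(n−k) ≤ 5n for every α and every x ∈ Γ with |x − p| ≤ 10n². Then there exist matrices M_α in the embedded copy of so(n−k+1) such that K_α(x) = M_α x for all x ∈ ℝ^{n+1} and all α, and {M_α}_{α=1}^{N} is an orthonormal basis of the embedded so(n−k+1). -/
/-!
Write `K_α x = A_α (x - q)` with `A_α = S J_α Sᵀ`, which is antisymmetric. On the cylinder the
quadratic part of `⟨A_α (x - q), ν(x)⟩` cancels by antisymmetry, so tangency near `p` says that a
linear form in the spherical coordinates vanishes on an open piece of the sphere; hence the mixed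
blocks of `A_α` and the spherical part of `A_α q` vanish. Testing the size bound at `p ± 10n² e_b`
along the flat directions shows that the flat block of every `A_α` has entries at most
`1 / (2n(n-k))`.

An orthonormal basis of `so(n-k+1)` satisfies the Casimir identity `∑ J_α² = -((n-k)/2) P`, with
`P` the coordinate projection onto the spherical coordinates. So `W = S P Sᵀ`, a projection,
equals `-(2/(n-k)) ∑ A_α²`; it commutes with the projection `Q` onto the flat coordinates, and
the trace of the projection `Q W` is a natural number. This trace is a multiple of the sum of the
squares of the flat rows of the `A_α`, which the entry bound makes smaller than `1`. Hence it is
`0`, the flat rows of every `A_α` vanish, and `M_α = A_α`.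
-/

open Matrix Finset

theorem eq_zero_of_inner_eq_zero_on_sphere_near {E : Type*} [NormedAddCommGroup E]
    [InnerProductSpace ℝ E] {p w : E} (hp : ‖p‖ = 1) {δ : ℝ} (hδ : 0 < δ)
    (h : ∀ ω : E, ‖ω‖ = 1 → ‖ω - p‖ < δ → inner ℝ w ω = 0) : w = 0 := by
  have hwp : inner ℝ w p = 0 := h p hp (by simpa using hδ)
  by_contra hw
  have hw' : 0 < ‖w‖ := norm_pos_iff.2 hw
  set u : E := ‖w‖⁻¹ • w with hu_def
  have hu : ‖u‖ = 1 := by simp [u, norm_smul, hw'.ne']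
  have hpu : inner ℝ p u = 0 := by rw [real_inner_comm, hu_def, real_inner_smul_left, hwp, mul_zero]
  -- the point with rational parameter `t` on the great circle through `p` and `u`
  set t : ℝ := δ / 4 with ht_def
  set ω : E := (1 + t ^ 2)⁻¹ • ((1 - t ^ 2) • p + (2 * t) • u) with hω_def
  have hω : ‖ω‖ = 1 := by
    have hnum : ‖(1 - t ^ 2) • p + (2 * t) • u‖ ^ 2 = (1 + t ^ 2) ^ 2 := by
      rw [norm_add_sq_real, norm_smul, norm_smul, real_inner_smul_left, real_inner_smul_right,
        hpu, hp, hu, Real.norm_eq_abs, Real.norm_eq_abs, mul_pow, mul_pow, sq_abs, sq_abs]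
      ring
    rw [← sq_eq_sq₀ (norm_nonneg _) zero_le_one, norm_smul, mul_pow, hnum, norm_inv,
      Real.norm_of_nonneg (by positivity), inv_pow, inv_mul_cancel₀ (by positivity), one_pow]
  have hdist : ‖ω - p‖ < δ := by
    have hωp : inner ℝ ω p = (1 - t ^ 2) / (1 + t ^ 2) := by
      rw [hω_def, real_inner_smul_left, inner_add_left, real_inner_smul_left, real_inner_smul_left,
        real_inner_self_eq_norm_sq, hp, real_inner_comm p u, hpu]
      ring
    have hsq : ‖ω - p‖ ^ 2 = 4 * t ^ 2 / (1 + t ^ 2) := by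
      rw [norm_sub_sq_real, hω, hp, hωp]
      field_simp
      ring
    refine lt_of_pow_lt_pow_left₀ 2 hδ.le ?_
    rw [hsq, div_lt_iff₀ (by positivity), show δ = 4 * t by rw [ht_def]; ring]
    nlinarith [show 0 < t by positivity]
  have hwu : inner ℝ w u = ‖w‖ := by
    rw [hu_def, real_inner_smul_right, real_inner_self_eq_norm_sq]
    field_simp
  have hwω : inner ℝ w ω = (1 + t ^ 2)⁻¹ * (2 * t) * ‖w‖ := by
    rw [hω_def, real_inner_smul_right, inner_add_right, real_inner_smul_right,
      real_inner_smul_right, hwp, hwu]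
    ring
  have := h ω hω hdist
  rw [hwω] at this
  exact absurd this (by positivity)

section Antisymmetric

variable {ι : Type*}

lemma apply_swap_of_transpose_eq_neg {R : Type*} [Neg R] {X : Matrix ι ι R} (hX : Xᵀ = -X)
    (i j : ι) : X j i = -X i j := by
  simpa using congrFun (congrFun hX i) j

lemma dotProduct_mulVec_self_eq_zero [Fintype ι] {A : Matrix ι ι ℝ} (hA : Aᵀ = -A)
    (v : ι → ℝ) : v ⬝ᵥ A *ᵥ v = 0 := by
  have h : v ⬝ᵥ A *ᵥ v = -(v ⬝ᵥ A *ᵥ v) :=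
    calc v ⬝ᵥ A *ᵥ v = (Aᵀ *ᵥ v) ⬝ᵥ v := by rw [dotProduct_mulVec, mulVec_transpose]
      _ = -(v ⬝ᵥ A *ᵥ v) := by rw [hA, neg_mulVec, neg_dotProduct, dotProduct_comm]
  linarith

end Antisymmetric

section Cylinder

variable {ι : Type*} {s : Finset ι}

lemma norm_toLp_restrict_sq (x : ι → ℝ) :
    ‖(WithLp.toLp 2 (s.restrict x) : EuclideanSpace ℝ s)‖ ^ 2 = ∑ i ∈ s, x i ^ 2 := by
  rw [EuclideanSpace.real_norm_sq_eq]
  exact sum_coe_sort s fun i => x i ^ 2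

lemma inner_toLp_restrict (x y : ι → ℝ) :
    inner ℝ (WithLp.toLp 2 (s.restrict x) : EuclideanSpace ℝ s) (WithLp.toLp 2 (s.restrict y))
      = ∑ i ∈ s, x i * y i := by
  simp [PiLp.inner_apply, sum_attach s fun i => x i * y i, mul_comm]

variable [Fintype ι] [DecidableEq ι]

/-- For `x = y + z` with `y` off `s` and `z` on `s`, antisymmetry kills the term `⟨A z, z⟩` of the
tangency condition, which leaves the linear form `⟨A (y - q), ·⟩` vanishing near `p` on the
sphere of the coordinates in `s`. -/
lemma mulVec_sub_eq_zero_of_tangent {A : Matrix ι ι ℝ} (hA : Aᵀ = -A) {p q : ι → ℝ}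
    (hp : ∑ i ∈ s, p i ^ 2 = 1)
    (htangent : ∀ x : ι → ℝ, ∑ i ∈ s, x i ^ 2 = 1 → ∑ i, (x i - p i) ^ 2 < 1 →
      ∑ i ∈ s, (A *ᵥ (x - q)) i * x i = 0)
    {y : ι → ℝ} (hy : ∀ i ∈ s, y i = 0) (hyp : ∑ i ∈ sᶜ, (y i - p i) ^ 2 < 3 / 4) :
    ∀ i ∈ s, (A *ᵥ (y - q)) i = 0 := by
  suffices (WithLp.toLp 2 (s.restrict (A *ᵥ (y - q))) : EuclideanSpace ℝ s) = 0 from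
    fun i hi => congrFun (congrArg WithLp.ofLp this) ⟨i, hi⟩
  refine eq_zero_of_inner_eq_zero_on_sphere_near (p := WithLp.toLp 2 (s.restrict p)) (δ := 1 / 2)
    ?_ (by norm_num) ?_
  · rw [← sq_eq_sq₀ (norm_nonneg _) zero_le_one, norm_toLp_restrict_sq, hp, one_pow]
  intro ω hω hωp
  set z : ι → ℝ := fun i => if h : i ∈ s then ω ⟨i, h⟩ else 0
  have hz : WithLp.toLp 2 (s.restrict z) = ω := by ext i; simp [z]
  have hzs : ∀ i ∉ s, z i = 0 := fun i hi => by simp [z, hi]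
  have hyz : ∀ i ∈ s, (y + z) i = z i := fun i hi => by simp [hy i hi]
  have hcyl : ∑ i ∈ s, (y + z) i ^ 2 = 1 := by
    rw [sum_congr rfl fun i hi => by rw [hyz i hi], ← norm_toLp_restrict_sq, hz, hω, one_pow]
  have hnear : ∑ i, ((y + z) i - p i) ^ 2 < 1 := by
    have hs : ∑ i ∈ s, ((y + z) i - p i) ^ 2 < (1 / 2) ^ 2 := by
      rw [sum_congr rfl fun i hi => by rw [hyz i hi]]
      have hsub : ω - WithLp.toLp 2 (s.restrict p) = WithLp.toLp 2 (s.restrict (z - p)) := by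
        rw [← hz]; rfl
      have : ‖ω - WithLp.toLp 2 (s.restrict p)‖ ^ 2 < (1 / 2) ^ 2 := by gcongr
      simpa only [hsub, norm_toLp_restrict_sq, Pi.sub_apply] using this
    have hsc : ∑ i ∈ sᶜ, ((y + z) i - p i) ^ 2 = ∑ i ∈ sᶜ, (y i - p i) ^ 2 :=
      sum_congr rfl fun i hi => by simp [hzs i (mem_compl.1 hi)]
    rw [← sum_add_sum_compl s]
    linarith
  have h := htangent (y + z) hcyl hnear
  have hzz : ∑ i ∈ s, (A *ᵥ z) i * z i = 0 := by
    rw [← dotProduct_mulVec_self_eq_zero hA z, dotProduct_comm]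
    exact sum_subset (subset_univ s) fun i _ hi => by simp [hzs i hi]
  rw [← hz, inner_toLp_restrict]
  rw [show y + z - q = (y - q) + z by abel, mulVec_add,
    sum_congr rfl fun i hi => by rw [hyz i hi]] at h
  simpa only [Pi.add_apply, add_mul, sum_add_distrib, hzz, add_zero] using h

theorem apply_eq_zero_and_mulVec_apply_eq_zero_of_tangent {A : Matrix ι ι ℝ} (hA : Aᵀ = -A)
    {p q : ι → ℝ} (hp : ∑ i ∈ s, p i ^ 2 = 1)
    (htangent : ∀ x : ι → ℝ, ∑ i ∈ s, x i ^ 2 = 1 → ∑ i, (x i - p i) ^ 2 < 1 →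
      ∑ i ∈ s, (A *ᵥ (x - q)) i * x i = 0) :
    (∀ i ∈ s, ∀ j ∉ s, A i j = 0) ∧ ∀ i ∈ s, (A *ᵥ q) i = 0 := by
  set y : ι → ℝ := fun i => if i ∈ s then 0 else p i
  have hy : ∀ i ∈ s, y i = 0 := fun i hi => if_pos hi
  have hyp : ∀ i ∈ sᶜ, y i = p i := fun i hi => if_neg (mem_compl.1 hi)
  have h₀ : ∀ i ∈ s, (A *ᵥ (y - q)) i = 0 :=
    mulVec_sub_eq_zero_of_tangent hA hp htangent hy
      (by rw [sum_eq_zero fun i hi => by rw [hyp i hi, sub_self, sq, zero_mul]]; norm_num)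
  have hcol : ∀ i ∈ s, ∀ j ∉ s, A i j = 0 := by
    intro i hi j hj
    have h₁ := mulVec_sub_eq_zero_of_tangent hA hp htangent (y := y + Pi.single j (1 / 2))
      (fun i hi => by simp [hy i hi, show i ≠ j by rintro rfl; exact hj hi])
      (by
        rw [sum_congr rfl fun i hi => by rw [Pi.add_apply, hyp i hi, add_sub_cancel_left],
          sum_eq_single_of_mem j (mem_compl.2 hj) fun i _ hij => by simp [hij]]
        norm_num) i hi
    rw [add_sub_right_comm, mulVec_add, Pi.add_apply, h₀ i hi, mulVec_single] at h₁
    simpa using h₁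
  refine ⟨hcol, fun i hi => ?_⟩
  have hAy : (A *ᵥ y) i = 0 := by
    refine sum_eq_zero fun j _ => ?_
    by_cases hj : j ∈ s
    · simp [hy j hj]
    · simp [hcol i hi j hj]
  have := h₀ i hi
  rw [mulVec_sub, Pi.sub_apply, hAy] at this
  linarith

theorem abs_apply_le_of_norm_le_on_cylinder {A : Matrix ι ι ℝ} {p q : ι → ℝ}
    (hp : ∑ i ∈ s, p i ^ 2 = 1) {R C : ℝ} (hR : 0 < R)
    (hbound : ∀ x : ι → ℝ, ∑ i ∈ s, x i ^ 2 = 1 → √(∑ i, (x i - p i) ^ 2) ≤ R →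
      √(∑ i, (A *ᵥ (x - q)) i ^ 2) ≤ C)
    (a : ι) {b : ι} (hb : b ∉ s) : |A a b| ≤ C / R := by
  have key : ∀ c : ℝ, |c| = R → |(A *ᵥ (p - q)) a + A a b * c| ≤ C := by
    intro c hc
    set x := p + Pi.single b c
    have hcyl : ∑ i ∈ s, x i ^ 2 = 1 := by
      rw [← hp]
      exact sum_congr rfl fun i hi => by simp [x, show i ≠ b by rintro rfl; exact hb hi]
    have hnear : √(∑ i, (x i - p i) ^ 2) ≤ R := by
      simp [x, Pi.single_apply, Real.sqrt_sq_eq_abs, hc]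
    calc |(A *ᵥ (p - q)) a + A a b * c| = |(A *ᵥ (x - q)) a| := by
          rw [show x - q = (p - q) + Pi.single b c by simp only [x]; abel, mulVec_add,
            Pi.add_apply]
          simp [mulVec_single, mul_comm]
      _ ≤ √(∑ i, (A *ᵥ (x - q)) i ^ 2) :=
          Real.abs_le_sqrt (single_le_sum (fun i _ => sq_nonneg _) (mem_univ a))
      _ ≤ C := hbound x hcyl hnear
  have h₁ := key R (abs_of_pos hR)
  have h₂ := key (-R) (by rw [abs_neg, abs_of_pos hR])
  set v := (A *ᵥ (p - q)) a
  have : 2 * (|A a b| * R) ≤ 2 * C :=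
    calc 2 * (|A a b| * R) = |(v + A a b * R) - (v + A a b * -R)| := by
          rw [show (v + A a b * R) - (v + A a b * -R) = 2 * (A a b * R) by ring, abs_mul, abs_mul,
            abs_two, abs_of_pos hR]
      _ ≤ |v + A a b * R| + |v + A a b * -R| := abs_sub _ _
      _ ≤ 2 * C := by linarith
  rw [le_div_iff₀ hR]
  linarith

end Cylinder

section Projection

variable {ι : Type*} [Fintype ι]

lemma sum_sum_sq_le {s : Finset ι} {A : Matrix ι ι ℝ}
    (hblock : ∀ i j, (i ∈ s ↔ j ∉ s) → A i j = 0) {ε : ℝ}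
    (hε : ∀ i ∈ s, ∀ j ∈ s, |A i j| ≤ ε) : ∑ i ∈ s, ∑ j, A i j ^ 2 ≤ #s ^ 2 * ε ^ 2 :=
  calc ∑ i ∈ s, ∑ j, A i j ^ 2 = ∑ i ∈ s, ∑ j ∈ s, A i j ^ 2 := by
        refine sum_congr rfl fun i hi => (sum_subset (subset_univ s) fun j _ hj => ?_).symm
        rw [hblock i j (iff_of_true hi hj), sq, zero_mul]
    _ ≤ ∑ i ∈ s, ∑ j ∈ s, ε ^ 2 := by
        refine sum_le_sum fun i hi => sum_le_sum fun j hj => ?_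
        exact sq_le_sq' (abs_le.1 (hε i hi j hj)).1 (abs_le.1 (hε i hi j hj)).2
    _ = #s ^ 2 * ε ^ 2 := by simp [sq, mul_assoc]

variable [DecidableEq ι]

theorem exists_trace_eq_natCast_of_isIdempotentElem {K : Type*} [Field K] {M : Matrix ι ι K}
    (h : IsIdempotentElem M) : ∃ r : ℕ, M.trace = r :=
  ⟨_, (trace_toLin'_eq M).symm.trans
    (LinearMap.IsIdempotentElem.isProj_range _ (h.map toLinAlgEquiv')).trace⟩

variable (s : Finset ι)

def coordProj : Matrix ι ι ℝ := diagonal fun i => if i ∈ s then 1 else 0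

variable {s}

lemma isIdempotentElem_coordProj : IsIdempotentElem (coordProj s) := by
  simp [IsIdempotentElem, coordProj, diagonal_mul_diagonal]

lemma commute_coordProj {A : Matrix ι ι ℝ} (hA : ∀ i j, (i ∈ s ↔ j ∉ s) → A i j = 0) :
    Commute (coordProj s) A := by
  ext i j
  simp only [coordProj, diagonal_mul, mul_diagonal]
  by_cases hi : i ∈ s <;> by_cases hj : j ∈ s <;> simp [hi, hj, hA i j]

lemma trace_coordProj_mul_mul_self {A : Matrix ι ι ℝ} (hA : Aᵀ = -A) :
    trace (coordProj s * (A * A)) = -∑ i ∈ s, ∑ j, A i j ^ 2 :=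
  calc trace (coordProj s * (A * A)) = ∑ i, if i ∈ s then ∑ j, A i j * A j i else 0 := by
        refine sum_congr rfl fun i _ => ?_
        rw [diag_apply, coordProj, diagonal_mul, mul_apply]
        split_ifs <;> simp
    _ = ∑ i ∈ s, ∑ j, -A i j ^ 2 := by
        rw [← sum_filter, filter_mem_eq_inter, univ_inter]
        exact sum_congr rfl fun i _ => sum_congr rfl fun j _ => by
          rw [apply_swap_of_transpose_eq_neg hA i j]; ring
    _ = -∑ i ∈ s, ∑ j, A i j ^ 2 := by simp only [sum_neg_distrib]

/-- `coordProj s * W` is idempotent, so its trace is a natural number; it is a multiple of the sum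
of the squares of the rows in `s` of the `A α`, which the entry bound makes smaller than `1`. -/
theorem apply_eq_zero_of_sum_mul_self_eq_smul_idempotent {β : Type*} [Fintype β]
    {A : β → Matrix ι ι ℝ} (hanti : ∀ α, (A α)ᵀ = -A α) {W : Matrix ι ι ℝ}
    (hW : IsIdempotentElem W) {d : ℝ} (hd : 0 < d) (hsum : ∑ α, A α * A α = (-d / 2) • W)
    (hblock : ∀ α i j, (i ∈ s ↔ j ∉ s) → A α i j = 0) {ε : ℝ}
    (hε : ∀ α, ∀ i ∈ s, ∀ j ∈ s, |A α i j| ≤ ε)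
    (hsmall : 2 * Fintype.card β * #s ^ 2 * ε ^ 2 < d) :
    ∀ α, ∀ i ∈ s, ∀ j, A α i j = 0 := by
  set F : β → ℝ := fun α => ∑ i ∈ s, ∑ j, A α i j ^ 2
  have hF_nonneg : ∀ α, 0 ≤ F α := fun α => by positivity
  have hF_le : ∀ α, F α ≤ #s ^ 2 * ε ^ 2 := fun α => sum_sum_sq_le (hblock α) (hε α)
  have hW' : W = (-2 / d) • ∑ α, A α * A α := by
    rw [hsum, smul_smul, div_mul_div_comm, neg_mul_neg, mul_comm 2 d, div_self (by positivity),
      one_smul]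
  have hcomm : Commute (coordProj s) W := by
    rw [hW']
    refine (Commute.sum_right _ _ _ fun α _ => ?_).smul_right _
    exact (commute_coordProj (hblock α)).mul_right (commute_coordProj (hblock α))
  have htrace : trace (coordProj s * W) = 2 / d * ∑ α, F α := by
    rw [hW', Matrix.mul_smul, trace_smul, mul_sum, trace_sum]
    simp only [trace_coordProj_mul_mul_self (hanti _), sum_neg_distrib, smul_eq_mul, F]
    ring
  obtain ⟨r, hr⟩ := exists_trace_eq_natCast_of_isIdempotentElem
    (IsIdempotentElem.mul_of_commute hcomm isIdempotentElem_coordProj hW)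
  have hr0 : r = 0 := by
    have hlt : (r : ℝ) < 1 := by
      rw [← hr, htrace, div_mul_eq_mul_div, div_lt_one hd]
      calc 2 * ∑ α, F α ≤ 2 * ∑ _α : β, (#s : ℝ) ^ 2 * ε ^ 2 := by gcongr with α; exact hF_le α
        _ < d := by simpa [mul_assoc] using hsmall
    exact_mod_cast Nat.lt_one_iff.1 (by exact_mod_cast hlt)
  have hF0 : ∑ α, F α = 0 := by
    rw [hr0, Nat.cast_zero, htrace] at hr
    simpa [hd.ne'] using hr
  intro α i hi j
  have hFα := (sum_eq_zero_iff_of_nonneg fun α _ => hF_nonneg α).1 hF0 α (mem_univ α)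
  have hrow := (sum_eq_zero_iff_of_nonneg fun i _ => by positivity).1 hFα i hi
  exact pow_eq_zero_iff two_ne_zero |>.1 <|
    (sum_eq_zero_iff_of_nonneg fun j _ => sq_nonneg _).1 hrow j (mem_univ j)

end Projection

section Casimir

variable {ι : Type*} [LinearOrder ι] (s : Finset ι)

def ltPairs : Finset (ι × ι) := (s ×ˢ s).filter fun π => π.1 < π.2

variable {s}

lemma sum_offDiag_eq_two_nsmul_sum_ltPairs {M : Type*} [AddCommMonoid M] {f : ι × ι → M}
    (hf : ∀ π, f π.swap = f π) : ∑ π ∈ s.offDiag, f π = 2 • ∑ π ∈ ltPairs s, f π := by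
  rw [← sum_filter_add_sum_filter_not s.offDiag fun π => π.1 < π.2, two_nsmul]
  congr 1
  · congr 1
    ext ⟨i, j⟩
    simp only [ltPairs, mem_filter, mem_offDiag, mem_product]
    exact ⟨fun h => ⟨⟨h.1.1, h.1.2.1⟩, h.2⟩, fun h => ⟨⟨h.1.1, h.1.2, h.2.ne⟩, h.2⟩⟩
  · refine sum_equiv (Equiv.prodComm ι ι) (fun ⟨i, j⟩ => ?_) fun π _ => (hf π).symm
    simp only [ltPairs, mem_filter, mem_offDiag, mem_product, Equiv.prodComm_apply, Prod.swap]
    constructor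
    · rintro ⟨⟨hi, hj, hij⟩, hlt⟩
      exact ⟨⟨hj, hi⟩, lt_of_le_of_ne (not_lt.1 hlt) (Ne.symm hij)⟩
    · rintro ⟨⟨hj, hi⟩, hlt⟩
      exact ⟨⟨hi, hj, hlt.ne'⟩, not_lt.2 hlt.le⟩

lemma two_mul_card_ltPairs : 2 * #(ltPairs s) = #s * (#s - 1) := by
  have h := sum_offDiag_eq_two_nsmul_sum_ltPairs (s := s) (f := fun _ => 1) fun _ => rfl
  simp only [sum_const, smul_eq_mul, mul_one, offDiag_card] at h
  rw [← h, Nat.mul_sub_one]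

lemma apply_eq_of_antisymm_of_lt {f g : ι → ι → ℝ} (hf : ∀ i j, f j i = -f i j)
    (hg : ∀ i j, g j i = -g i j) (h : ∀ i j, i < j → f i j = g i j) (i j : ι) : f i j = g i j := by
  rcases lt_trichotomy i j with hij | rfl | hij
  · exact h i j hij
  · linarith [hf i i, hg i i]
  · rw [← neg_neg (f i j), ← hf, ← neg_neg (g i j), ← hg, h j i hij]

variable (s) in
/-- The reproducing kernel of the embedded `so(s)` for the Frobenius inner product. -/
noncomputable def soKernel (i j k l : ι) : ℝ :=
  if i ∈ s ∧ j ∈ s then ((if i = k ∧ j = l then 1 else 0) - (if i = l ∧ j = k then 1 else 0)) / 2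
  else 0

lemma soKernel_swap_left (i j k l : ι) : soKernel s j i k l = -soKernel s i j k l := by
  by_cases h : i ∈ s ∧ j ∈ s
  · rw [soKernel, soKernel, if_pos h, if_pos h.symm]
    simp only [and_comm (a := j = _)]
    ring
  · rw [soKernel, soKernel, if_neg h, if_neg fun h' => h h'.symm, neg_zero]

lemma soKernel_swap_right (i j k l : ι) : soKernel s i j l k = -soKernel s i j k l := by
  unfold soKernel
  split_ifs <;> ring

variable [Fintype ι]

lemma trace_transpose_mul_eq_two_mul_sum_ltPairs {X Y : Matrix ι ι ℝ} (hX : Xᵀ = -X)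
    (hY : Yᵀ = -Y) (hXs : ∀ i j, (i ∉ s ∨ j ∉ s) → X i j = 0) :
    trace (Xᵀ * Y) = 2 * ∑ π ∈ ltPairs s, X π.1 π.2 * Y π.1 π.2 := by
  rw [two_mul, ← two_nsmul, ← sum_offDiag_eq_two_nsmul_sum_ltPairs
    (f := fun π => X π.1 π.2 * Y π.1 π.2) fun π => by
      simp only [Prod.fst_swap, Prod.snd_swap, apply_swap_of_transpose_eq_neg hX π.1,
        apply_swap_of_transpose_eq_neg hY π.1, neg_mul_neg]]
  have hzero : ∀ π ∈ (univ : Finset (ι × ι)), π ∉ s.offDiag → X π.1 π.2 * Y π.1 π.2 = 0 := by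
    rintro ⟨i, j⟩ - hπ
    simp only [mem_offDiag, not_and_or, not_not] at hπ
    rcases hπ with hi | hj | rfl
    · simp [hXs i j (Or.inl hi)]
    · simp [hXs i j (Or.inr hj)]
    · simp [show X i i = 0 by linarith [apply_swap_of_transpose_eq_neg hX i i]]
  rw [sum_subset (subset_univ _) hzero, Fintype.sum_prod_type, sum_comm]
  simp [trace, mul_apply]

variable {β : Type*} [Fintype β] [DecidableEq β] {J : β → Matrix ι ι ℝ}

/-- The matrix `G` of the coordinates of the `J α` above the diagonal satisfies
`G (2 Gᵀ) = 1` by orthonormality; it is square, so also `(2 Gᵀ) G = 1`. -/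
lemma sum_mul_apply_ltPairs_of_orthonormal (hanti : ∀ α, (J α)ᵀ = -J α)
    (hsupp : ∀ α i j, (i ∉ s ∨ j ∉ s) → J α i j = 0)
    (horth : ∀ α γ, trace ((J α)ᵀ * J γ) = if α = γ then 1 else 0)
    (hcard : 2 * Fintype.card β = #s * (#s - 1)) {π π' : ι × ι} (hπ : π ∈ ltPairs s)
    (hπ' : π' ∈ ltPairs s) :
    ∑ α, J α π.1 π.2 * J α π'.1 π'.2 = if π = π' then 1 / 2 else 0 := by
  set G : Matrix β (ltPairs s) ℝ := of fun α π => J α π.1.1 π.1.2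
  have hGG : G * ((2 : ℝ) • Gᵀ) = 1 := by
    ext α γ
    rw [mul_apply, one_apply, ← horth, trace_transpose_mul_eq_two_mul_sum_ltPairs (hanti α)
      (hanti γ) (hsupp α), ← sum_coe_sort (ltPairs s), mul_sum]
    simp only [G, of_apply, transpose_apply, Matrix.smul_apply, smul_eq_mul]
    exact sum_congr rfl fun _ _ => by ring
  have hcard' : Fintype.card β = Fintype.card (ltPairs s) := by
    have := two_mul_card_ltPairs (s := s)
    rw [Fintype.card_coe]
    omega
  have h := congrFun (congrFun ((mul_eq_one_comm_of_card_eq _ _ _ hcard').1 hGG) ⟨π, hπ⟩)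
    ⟨π', hπ'⟩
  rw [mul_apply, one_apply] at h
  simp only [G, of_apply, transpose_apply, Matrix.smul_apply, smul_eq_mul, Subtype.mk.injEq,
    mul_assoc, ← mul_sum] at h
  split_ifs at h ⊢ <;> linarith

lemma sum_mul_apply_of_orthonormal (hanti : ∀ α, (J α)ᵀ = -J α)
    (hsupp : ∀ α i j, (i ∉ s ∨ j ∉ s) → J α i j = 0)
    (horth : ∀ α γ, trace ((J α)ᵀ * J γ) = if α = γ then 1 else 0)
    (hcard : 2 * Fintype.card β = #s * (#s - 1)) (i j k l : ι) :
    ∑ α, J α i j * J α k l = soKernel s i j k l := by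
  refine apply_eq_of_antisymm_of_lt (f := fun i j => ∑ α, J α i j * J α k l)
    (g := fun i j => soKernel s i j k l)
    (fun i j => by
      simp only [apply_swap_of_transpose_eq_neg (hanti _) i j, neg_mul, sum_neg_distrib])
    (fun i j => soKernel_swap_left i j k l) (fun i j hij => ?_) i j
  refine apply_eq_of_antisymm_of_lt (f := fun k l => ∑ α, J α i j * J α k l)
    (g := fun k l => soKernel s i j k l)
    (fun k l => by
      simp only [apply_swap_of_transpose_eq_neg (hanti _) k l, mul_neg, sum_neg_distrib])
    (fun k l => soKernel_swap_right i j k l) (fun k l hkl => ?_) k l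
  by_cases hs : i ∈ s ∧ j ∈ s ∧ k ∈ s ∧ l ∈ s
  · have h := sum_mul_apply_ltPairs_of_orthonormal hanti hsupp horth hcard (π := (i, j))
      (π' := (k, l)) (by simp [ltPairs, hs.1, hs.2.1, hij]) (by simp [ltPairs, hs.2.2, hkl])
    have hne : ¬(i = l ∧ j = k) := fun ⟨hil, hjk⟩ => by subst hil hjk; exact lt_asymm hij hkl
    simp only [Prod.mk.injEq] at h
    simp only [h, soKernel, if_pos (And.intro hs.1 hs.2.1), if_neg hne]
    split_ifs <;> norm_num
  · have hzero : ∀ α, J α i j * J α k l = 0 := fun α => by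
      by_cases hij' : i ∈ s ∧ j ∈ s
      · rw [hsupp α k l (by tauto), mul_zero]
      · rw [hsupp α i j (by tauto), zero_mul]
    rw [sum_eq_zero fun α _ => hzero α, soKernel]
    split_ifs <;> grind

theorem sum_mul_self_eq_smul_coordProj_of_orthonormal (hanti : ∀ α, (J α)ᵀ = -J α)
    (hsupp : ∀ α i j, (i ∉ s ∨ j ∉ s) → J α i j = 0)
    (horth : ∀ α γ, trace ((J α)ᵀ * J γ) = if α = γ then 1 else 0)
    (hcard : 2 * Fintype.card β = #s * (#s - 1)) :
    ∑ α, J α * J α = (-((#s : ℝ) - 1) / 2) • coordProj s := by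
  ext i j
  simp only [Matrix.sum_apply, mul_apply]
  rw [sum_comm]
  simp only [sum_mul_apply_of_orthonormal hanti hsupp horth hcard, soKernel]
  by_cases hi : i ∈ s
  · simp only [hi, true_and, and_true, coordProj, Matrix.smul_apply, diagonal_apply, smul_eq_mul]
    rw [← sum_filter, ← sum_div, sum_sub_distrib, filter_mem_eq_inter, univ_inter]
    by_cases hij : i = j
    · subst hij
      simp [hi, eq_comm (a := i)]
    · have h1 : ∀ l, ¬(i = l ∧ l = j) := fun l h => hij (h.1.trans h.2)
      simp only [h1, hij, if_false, sum_const_zero, sub_zero, zero_div, mul_zero]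
  · simp [hi, coordProj, diagonal_apply]

end Casimir

section Conjugation

lemma transpose_conj {ι : Type*} [Fintype ι] (S X : Matrix ι ι ℝ) :
    (S * X * Sᵀ)ᵀ = S * Xᵀ * Sᵀ := by
  rw [transpose_mul, transpose_mul, transpose_transpose, mul_assoc]

variable {ι : Type*} [Fintype ι] [DecidableEq ι] {S : Matrix ι ι ℝ}

lemma conj_mul_conj (hS : Sᵀ * S = 1) (X Y : Matrix ι ι ℝ) :
    S * X * Sᵀ * (S * Y * Sᵀ) = S * (X * Y) * Sᵀ := by
  simp only [mul_assoc]
  rw [← mul_assoc Sᵀ S, hS, one_mul]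

lemma trace_transpose_conj_mul_conj (hS : Sᵀ * S = 1) (X Y : Matrix ι ι ℝ) :
    trace ((S * X * Sᵀ)ᵀ * (S * Y * Sᵀ)) = trace (Xᵀ * Y) := by
  rw [transpose_conj, conj_mul_conj hS, trace_mul_comm, ← mul_assoc, hS, one_mul]

end Conjugation

theorem conj_apply_eq_zero_and_mulVec_eq_zero_of_tangent {ι β : Type*} [Fintype ι]
    [LinearOrder ι] [Fintype β] [DecidableEq β] {s : Finset ι} {J : β → Matrix ι ι ℝ}
    (hanti : ∀ α, (J α)ᵀ = -J α) (hsupp : ∀ α i j, (i ∉ s ∨ j ∉ s) → J α i j = 0)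
    (horth : ∀ α γ, trace ((J α)ᵀ * J γ) = if α = γ then 1 else 0)
    (hcard : 2 * Fintype.card β = #s * (#s - 1)) {S : Matrix ι ι ℝ} (hS : Sᵀ * S = 1)
    {p q : ι → ℝ} (hp : ∑ i ∈ s, p i ^ 2 = 1)
    (htangent : ∀ α, ∀ x : ι → ℝ, ∑ i ∈ s, x i ^ 2 = 1 → ∑ i, (x i - p i) ^ 2 < 1 →
      ∑ i ∈ s, ((S * J α * Sᵀ) *ᵥ (x - q)) i * x i = 0)
    {R C : ℝ} (hR : 0 < R)
    (hbound : ∀ α, ∀ x : ι → ℝ, ∑ i ∈ s, x i ^ 2 = 1 → √(∑ i, (x i - p i) ^ 2) ≤ R →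
      √(∑ i, ((S * J α * Sᵀ) *ᵥ (x - q)) i ^ 2) ≤ C)
    (hsmall : 2 * Fintype.card β * #sᶜ ^ 2 * (C / R) ^ 2 < #s - 1) (α : β) :
    (∀ i j, (i ∉ s ∨ j ∉ s) → (S * J α * Sᵀ) i j = 0) ∧ (S * J α * Sᵀ) *ᵥ q = 0 := by
  have hd : (0 : ℝ) < #s - 1 := lt_of_le_of_lt (by positivity) hsmall
  set A : β → Matrix ι ι ℝ := fun α => S * J α * Sᵀ
  have hAanti : ∀ α, (A α)ᵀ = -A α := fun α => by
    simp only [A, transpose_conj, hanti, Matrix.mul_neg, Matrix.neg_mul]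
  have hA' := fun α => apply_swap_of_transpose_eq_neg (hAanti α)
  have htan := fun α =>
    apply_eq_zero_and_mulVec_apply_eq_zero_of_tangent (hAanti α) hp (htangent α)
  have hblock : ∀ α i j, (i ∈ sᶜ ↔ j ∉ sᶜ) → A α i j = 0 := by
    intro α i j hij
    by_cases hi : i ∈ s
    · exact (htan α).1 i hi j (by simpa [hi] using hij)
    · rw [← neg_neg (A α i j), ← hA', (htan α).1 j (by simpa [hi] using hij) i hi, neg_zero]
  have hentry : ∀ α, ∀ i ∈ sᶜ, ∀ j ∈ sᶜ, |A α i j| ≤ C / R := fun α i _ j hj =>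
    abs_apply_le_of_norm_le_on_cylinder hp hR (hbound α) i (mem_compl.1 hj)
  have hcasimir : ∑ α, A α * A α = (-((#s : ℝ) - 1) / 2) • (S * coordProj s * Sᵀ) := by
    simp only [A, conj_mul_conj hS]
    rw [← sum_mul, ← mul_sum, sum_mul_self_eq_smul_coordProj_of_orthonormal hanti hsupp horth hcard,
      Matrix.mul_smul, Matrix.smul_mul]
  have hW : IsIdempotentElem (S * coordProj s * Sᵀ) := by
    rw [IsIdempotentElem, conj_mul_conj hS, isIdempotentElem_coordProj.eq]
  have hrow := apply_eq_zero_of_sum_mul_self_eq_smul_idempotent hAanti hW hd hcasimir hblock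
    hentry hsmall
  have hsupp' : ∀ i j, (i ∉ s ∨ j ∉ s) → A α i j = 0 := by
    rintro i j (hi | hj)
    · exact hrow α i (mem_compl.2 hi) j
    · rw [← neg_neg (A α i j), ← hA', hrow α j (mem_compl.2 hj) i, neg_zero]
  refine ⟨hsupp', funext fun i => ?_⟩
  by_cases hi : i ∈ s
  · exact (htan α).2 i hi
  · show ∑ j, A α i j * q j = 0
    exact sum_eq_zero fun j _ => by rw [hsupp' i j (Or.inl hi), zero_mul]

lemma card_compl_filter_le_val {n k : ℕ} (hk : k ≤ n + 1) :
    #(univ.filter fun i : Fin (n + 1) => k ≤ (i : ℕ))ᶜ = k := by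
  rw [compl_filter]
  simp only [not_le]
  rw [Fin.card_filter_val_lt]
  omega

lemma card_filter_le_val {n k : ℕ} (hk : k ≤ n + 1) :
    #(univ.filter fun i : Fin (n + 1) => k ≤ (i : ℕ)) = n + 1 - k := by
  have := card_compl_add_card (univ.filter fun i : Fin (n + 1) => k ≤ (i : ℕ))
  rw [Fintype.card_fin, card_compl_filter_le_val hk] at this
  omega

lemma cylinder_entry_bound_small {n k N : ℕ} (hkn : k < n) (hN : 2 * N = (n - k + 1) * (n - k)) :
    2 * (N : ℝ) * k ^ 2 * (5 * n / (n - k) / (10 * n ^ 2)) ^ 2 < ((n + 1 - k : ℕ) : ℝ) - 1 := by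
  have h2N : 2 * (N : ℝ) = (n - k + 1) * (n - k) := by
    have := congrArg (Nat.cast : ℕ → ℝ) hN
    push_cast [Nat.cast_sub hkn.le] at this
    exact this
  rw [h2N, Nat.cast_sub (by omega), Nat.cast_add_one, add_sub_right_comm, add_sub_cancel_right]
  have hd : (1 : ℝ) ≤ n - k := by
    rw [le_sub_iff_add_le']; exact_mod_cast hkn
  have hn : (0 : ℝ) < n := by linarith [(Nat.cast_nonneg k : (0 : ℝ) ≤ k)]
  have h : 5 * n / (n - k) / (10 * n ^ 2) = 1 / (2 * n * (n - k) : ℝ) := by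
    field_simp; ring
  rw [h, div_pow, one_pow, mul_one_div, div_lt_iff₀ (by positivity)]
  set d : ℝ := n - k
  have h1 : (d + 1) * k ^ 2 ≤ 2 * d ^ 2 * k ^ 2 := by gcongr; nlinarith
  have h2 : 2 * d ^ 2 * k ^ 2 < 4 * n ^ 2 * d ^ 2 := by
    have : (k : ℝ) ^ 2 < 2 * n ^ 2 := by nlinarith [(Nat.cast_nonneg k : (0 : ℝ) ≤ k)]
    nlinarith [mul_lt_mul_of_pos_left this (by positivity : 0 < 2 * d ^ 2)]
  nlinarith [mul_lt_mul_of_pos_left (h1.trans_lt h2) (by positivity : 0 < d)]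

theorem rotation_fields_tangent_to_cylinder_are_standard_general
    (n k N : ℕ) (hkn : k < n)
    (hN : 2 * N = (n - k + 1) * (n - k))
    (J : Fin N → Matrix (Fin (n + 1)) (Fin (n + 1)) ℝ)
    (hJanti : ∀ α, (J α)ᵀ = -(J α))
    (hJblock : ∀ α, ∀ i j : Fin (n + 1), ((i : ℕ) < k ∨ (j : ℕ) < k) → J α i j = 0)
    (hJortho : ∀ α β, Matrix.trace ((J α)ᵀ * J β) = if α = β then (1 : ℝ) else 0)
    (S : Matrix (Fin (n + 1)) (Fin (n + 1)) ℝ) (hS : S * Sᵀ = 1)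
    (q : Fin (n + 1) → ℝ)
    (K : Fin N → (Fin (n + 1) → ℝ) → (Fin (n + 1) → ℝ))
    (hK : ∀ α x, K α x = (S * J α * S⁻¹).mulVec (x - q))
    (p : Fin (n + 1) → ℝ)
    (hp : (∑ i : Fin (n + 1), if k ≤ (i : ℕ) then p i ^ 2 else 0) = 1)
    (htangent : ∀ α, ∀ x : Fin (n + 1) → ℝ,
      (∑ i : Fin (n + 1), if k ≤ (i : ℕ) then x i ^ 2 else 0) = 1 →
      Real.sqrt (∑ i : Fin (n + 1), (x i - p i) ^ 2) < 1 →
      (∑ i : Fin (n + 1), if k ≤ (i : ℕ) then K α x i * x i else 0) = 0)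
    (hbound : ∀ α, ∀ x : Fin (n + 1) → ℝ,
      (∑ i : Fin (n + 1), if k ≤ (i : ℕ) then x i ^ 2 else 0) = 1 →
      Real.sqrt (∑ i : Fin (n + 1), (x i - p i) ^ 2) ≤ 10 * (n : ℝ) ^ 2 →
      Real.sqrt (∑ i : Fin (n + 1), (K α x i) ^ 2) * ((n : ℝ) - k) ≤ 5 * n) :
    ∃ M : Fin N → Matrix (Fin (n + 1)) (Fin (n + 1)) ℝ,
      (∀ α, (M α)ᵀ = -(M α)) ∧
      (∀ α, ∀ i j : Fin (n + 1), ((i : ℕ) < k ∨ (j : ℕ) < k) → M α i j = 0) ∧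
      (∀ α β, Matrix.trace ((M α)ᵀ * M β) = if α = β then (1 : ℝ) else 0) ∧
      (∀ α x, K α x = (M α).mulVec x) := by
  set s : Finset (Fin (n + 1)) := univ.filter fun i => k ≤ (i : ℕ)
  have hsum : ∀ f : Fin (n + 1) → ℝ,
      (∑ i : Fin (n + 1), if k ≤ (i : ℕ) then f i else 0) = ∑ i ∈ s, f i :=
    fun f => (sum_filter _ f).symm
  have hnotmem : ∀ i : Fin (n + 1), i ∉ s ↔ (i : ℕ) < k := by simp [s]
  have hcard : #s = n + 1 - k := card_filter_le_val (by omega)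
  have hSt : Sᵀ * S = 1 := mul_eq_one_comm.1 hS
  have hK' : ∀ α x, K α x = (S * J α * Sᵀ) *ᵥ (x - q) := by
    simp [hK, inv_eq_right_inv hS]
  have hnk : (0 : ℝ) < n - k := by rw [sub_pos]; exact_mod_cast hkn
  have hn : (0 : ℝ) < n := by exact_mod_cast (show 0 < n by omega)
  have key := conj_apply_eq_zero_and_mulVec_eq_zero_of_tangent (s := s) hJanti
    (fun α i j hij => hJblock α i j (by simpa only [hnotmem] using hij)) hJortho
    (by rw [Fintype.card_fin, hcard, hN, show n + 1 - k = n - k + 1 by omega, Nat.add_sub_cancel])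
    hSt (by rwa [← hsum])
    (fun α x hx hnear => by
      simpa only [hsum, hK'] using
        htangent α x (by rwa [hsum]) (by rwa [Real.sqrt_lt' one_pos, one_pow]))
    (R := 10 * (n : ℝ) ^ 2) (C := 5 * n / (n - k)) (by positivity)
    (fun α x hx hnear => by
      rw [le_div_iff₀ hnk]
      simpa only [hK'] using hbound α x (by rwa [hsum]) hnear)
    (by
      rw [card_compl_filter_le_val (by omega), hcard, Fintype.card_fin]
      exact cylinder_entry_bound_small hkn hN)
  refine ⟨fun α => S * J α * Sᵀ, fun α => ?_, fun α i j hij => (key α).1 i j ?_,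
    fun α β => ?_, fun α x => ?_⟩
  · rw [transpose_conj, hJanti, Matrix.mul_neg, Matrix.neg_mul]
  · simpa only [hnotmem] using hij
  · rw [trace_transpose_conj_mul_conj hSt, hJortho]
  · rw [hK', mulVec_sub, (key α).2, sub_zero]

/-- **Lemma A.1, cylindrical case**: rotation vector fields `K_α(x) = S J_α S⁻¹ (x - q)`,
built from an orthonormal basis `{J_α}` of the embedded `so(n-k+1) ⊂ so(n+1)` (block form
`diag(0_{k×k}, J̄)`, Frobenius inner product), which are tangent to the unit-radius cylinder
`Γ = ℝ^k × S^{n-k}` on a unit ball around `p ∈ Γ` and satisfy `|K_α|·(n-k) ≤ 5n` on a ball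
of radius `10n²`, must be of the standard form `K_α(x) = M_α x` with `{M_α}` an orthonormal
basis of the embedded `so(n-k+1)`.
Here the cylinder is `{x : Σ_{i ≥ k} xᵢ² = 1}` with outward unit normal
`ν(x)ᵢ = xᵢ` for `i ≥ k` and `0` otherwise. -/
theorem rotation_fields_tangent_to_cylinder_are_standard
    (n k N : ℕ) (hk : 1 ≤ k) (hkn : k < n)
    (hN : 2 * N = (n - k + 1) * (n - k))
    (J : Fin N → Matrix (Fin (n + 1)) (Fin (n + 1)) ℝ)
    (hJanti : ∀ α, (J α)ᵀ = -(J α))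
    (hJblock : ∀ α, ∀ i j : Fin (n + 1), ((i : ℕ) < k ∨ (j : ℕ) < k) → J α i j = 0)
    (hJortho : ∀ α β, Matrix.trace ((J α)ᵀ * J β) = if α = β then (1 : ℝ) else 0)
    (S : Matrix (Fin (n + 1)) (Fin (n + 1)) ℝ) (hS : S * Sᵀ = 1)
    (q : Fin (n + 1) → ℝ)
    (K : Fin N → (Fin (n + 1) → ℝ) → (Fin (n + 1) → ℝ))
    (hK : ∀ α x, K α x = (S * J α * S⁻¹).mulVec (x - q))
    (p : Fin (n + 1) → ℝ)
    (hp : (∑ i : Fin (n + 1), if k ≤ (i : ℕ) then p i ^ 2 else 0) = 1)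
    (htangent : ∀ α, ∀ x : Fin (n + 1) → ℝ,
      (∑ i : Fin (n + 1), if k ≤ (i : ℕ) then x i ^ 2 else 0) = 1 →
      Real.sqrt (∑ i : Fin (n + 1), (x i - p i) ^ 2) < 1 →
      (∑ i : Fin (n + 1), if k ≤ (i : ℕ) then K α x i * x i else 0) = 0)
    (hbound : ∀ α, ∀ x : Fin (n + 1) → ℝ,
      (∑ i : Fin (n + 1), if k ≤ (i : ℕ) then x i ^ 2 else 0) = 1 →
      Real.sqrt (∑ i : Fin (n + 1), (x i - p i) ^ 2) ≤ 10 * (n : ℝ) ^ 2 →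
      Real.sqrt (∑ i : Fin (n + 1), (K α x i) ^ 2) * ((n : ℝ) - k) ≤ 5 * n) :
    ∃ M : Fin N → Matrix (Fin (n + 1)) (Fin (n + 1)) ℝ,
      (∀ α, (M α)ᵀ = -(M α)) ∧
      (∀ α, ∀ i j : Fin (n + 1), ((i : ℕ) < k ∨ (j : ℕ) < k) → M α i j = 0) ∧
      (∀ α β, Matrix.trace ((M α)ᵀ * M β) = if α = β then (1 : ℝ) else 0) ∧
      (∀ α x, K α x = (M α).mulVec x) :=
  rotation_fields_tangent_to_cylinder_are_standard_general n k N hkn hN J hJanti hJblock hJortho S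
    hS q K hK p hp htangent hbound
end

section
/- Block structure of rotation fields tangent to a cylinder: Let 1 ≤ k ≤ n−1, let Γ = {(y,ω) : y ∈ ℝ^k, ω ∈ S^{n−k}} ⊂ ℝ^{n+1} be the cylinder of unit radius with outward unit normal ν(y,ω) = (0,ω), let M ∈ so(n+1) be an antisymmetric (n+1)×(n+1) matrix and q ∈ ℝ^{n+1}. If ⟨M(x − q), ν(x)⟩ = 0 for all x in some nonempty open subset of Γ, then M_{il} = 0 whenever k+1 ≤ i ≤ n+1 and 1 ≤ l ≤ k (so M preserves the orthogonal splitting ℝ^k ⊕ ℝ^{n−k+1}), and (Mq)_i = 0 for all k+1 ≤ i ≤ n+1. -/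
/-!
Write `x = y + z` with `y` the axial and `z` the normal component. Antisymmetry kills `⟨M z, z⟩`,
so the tangency expression is `⟨M (y - q), z⟩`, which is linear in `z`. Radially projecting onto
the cylinder therefore makes it vanish on a nonempty open subset of the ambient space. There it is
affine along every coordinate line, hence has zero slope: moving `z` gives `(M (y - q))ᵢ = 0` for
normal `i`, and then moving `y` gives `M i l = 0` for axial `l`, and finally `(M q)ᵢ = 0`.
-/

open Matrix Topology Filter

theorem IsOpen.slope_eq_zero_of_eqOn_zero {E : Type*} [TopologicalSpace E] [AddCommGroup E]
    [Module ℝ E] [ContinuousAdd E] [ContinuousSMul ℝ E] {f : E → ℝ} {V : Set E} (hV : IsOpen V)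
    (hf : Set.EqOn f 0 V) {x : E} (hx : x ∈ V) (v : E) {c : ℝ}
    (hline : ∀ t : ℝ, f (x + t • v) = f x + t * c) : c = 0 := by
  have hnear : ∀ᶠ t : ℝ in 𝓝 0, x + t • v ∈ V :=
    (by fun_prop : Continuous fun t : ℝ => x + t • v).continuousAt.preimage_mem_nhds
      (by simpa using hV.mem_nhds hx)
  obtain ⟨t, htV, ht⟩ := ((eventually_nhdsWithin_of_eventually_nhds hnear).and
    self_mem_nhdsWithin : ∀ᶠ t in 𝓝[≠] (0 : ℝ), x + t • v ∈ V ∧ t ≠ 0).exists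
  have := hline t
  rw [hf htV, hf hx] at this
  simpa [ht] using this

section Indicator

variable {ι : Type*}

theorem continuous_indicator_self (s : Set ι) : Continuous fun x : ι → ℝ => s.indicator x := by
  refine continuous_pi fun i => ?_
  by_cases hi : i ∈ s
  · simpa [Set.indicator_of_mem hi] using continuous_apply i
  · simpa [Set.indicator_of_notMem hi] using continuous_const

variable [DecidableEq ι] {s : Set ι} {i : ι}

theorem indicator_add_smul_single_of_mem (hi : i ∈ s) (x : ι → ℝ) (t : ℝ) :
    s.indicator (x + t • Pi.single i 1) = s.indicator x + t • Pi.single i 1 := by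
  ext j
  by_cases hj : j ∈ s
  · simp [Set.indicator_of_mem hj]
  · have : j ≠ i := by rintro rfl; exact hj hi
    simp [Set.indicator_of_notMem hj, this]

theorem indicator_add_smul_single_of_notMem (hi : i ∉ s) (x : ι → ℝ) (t : ℝ) :
    s.indicator (x + t • Pi.single i 1) = s.indicator x := by
  ext j
  by_cases hj : j ∈ s
  · have : j ≠ i := by rintro rfl; exact hi hj
    simp [Set.indicator_of_mem hj, this]
  · simp [Set.indicator_of_notMem hj]

end Indicator

section Cylinder

variable {ι : Type*} [Fintype ι]

theorem dotProduct_self_nonneg (v : ι → ℝ) : 0 ≤ v ⬝ᵥ v :=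
  Finset.sum_nonneg fun i _ => mul_self_nonneg (v i)

theorem dotProduct_mulVec_self_eq_zero_of_transpose_eq_neg {M : Matrix ι ι ℝ} (hM : Mᵀ = -M)
    (v : ι → ℝ) : v ⬝ᵥ M *ᵥ v = 0 := by
  have h : v ⬝ᵥ M *ᵥ v = -(v ⬝ᵥ M *ᵥ v) := by
    conv_lhs => rw [dotProduct_mulVec, ← mulVec_transpose, hM, neg_mulVec, neg_dotProduct,
      dotProduct_comm]
  linarith

theorem mulVec_sub_dotProduct_indicator_of_transpose_eq_neg {M : Matrix ι ι ℝ} (hM : Mᵀ = -M)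
    (s : Set ι) (x q : ι → ℝ) :
    M *ᵥ (x - q) ⬝ᵥ s.indicator x = M *ᵥ (sᶜ.indicator x - q) ⬝ᵥ s.indicator x := by
  have hx : x - q = (sᶜ.indicator x - q) + s.indicator x := by
    rw [sub_add_eq_add_sub, Set.indicator_compl_add_self]
  rw [hx, mulVec_add, add_dotProduct, dotProduct_comm (M *ᵥ s.indicator x),
    dotProduct_mulVec_self_eq_zero_of_transpose_eq_neg hM, add_zero]

/-- `s` is the set of normal coordinates: the cylinder is `ℝ^sᶜ × S(ℝ^s)`. -/
def cylinder (s : Set ι) : Set (ι → ℝ) := {x | s.indicator x ⬝ᵥ s.indicator x = 1}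

noncomputable def cylinderRetract (s : Set ι) (x : ι → ℝ) : ι → ℝ :=
  sᶜ.indicator x + (√(s.indicator x ⬝ᵥ s.indicator x))⁻¹ • s.indicator x

variable (s : Set ι)

theorem indicator_cylinderRetract (x : ι → ℝ) :
    s.indicator (cylinderRetract s x) = (√(s.indicator x ⬝ᵥ s.indicator x))⁻¹ • s.indicator x := by
  ext i
  by_cases hi : i ∈ s <;> simp [cylinderRetract, hi]

theorem compl_indicator_cylinderRetract (x : ι → ℝ) :
    sᶜ.indicator (cylinderRetract s x) = sᶜ.indicator x := by
  ext i
  by_cases hi : i ∈ s <;> simp [cylinderRetract, hi]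

theorem cylinderRetract_of_mem {x : ι → ℝ} (hx : x ∈ cylinder s) : cylinderRetract s x = x := by
  rw [cylinderRetract, hx.out, Real.sqrt_one, inv_one, one_smul, Set.indicator_compl_add_self]

theorem cylinderRetract_mem_cylinder {x : ι → ℝ} (hx : s.indicator x ⬝ᵥ s.indicator x ≠ 0) :
    cylinderRetract s x ∈ cylinder s := by
  show s.indicator _ ⬝ᵥ s.indicator _ = 1
  rw [indicator_cylinderRetract, smul_dotProduct, dotProduct_smul, smul_eq_mul, smul_eq_mul,
    ← mul_assoc, ← mul_inv, Real.mul_self_sqrt (dotProduct_self_nonneg _), inv_mul_cancel₀ hx]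

theorem continuousOn_cylinderRetract :
    ContinuousOn (cylinderRetract s) {x | s.indicator x ⬝ᵥ s.indicator x ≠ 0} := by
  have hz := continuous_indicator_self s
  have hzc := continuous_indicator_self sᶜ
  intro x hx
  have hsqrt : √(s.indicator x ⬝ᵥ s.indicator x) ≠ 0 :=
    (Real.sqrt_ne_zero (dotProduct_self_nonneg _)).mpr hx
  unfold cylinderRetract
  fun_prop (disch := exact hsqrt)

variable {M : Matrix ι ι ℝ} (q : ι → ℝ)

theorem exists_isOpen_eqOn_zero_of_tangent (hM : Mᵀ = -M) {U : Set (ι → ℝ)} (hU : IsOpen U)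
    (hne : (U ∩ cylinder s).Nonempty)
    (htangent : ∀ x ∈ U ∩ cylinder s, M *ᵥ (x - q) ⬝ᵥ s.indicator x = 0) :
    ∃ V : Set (ι → ℝ), IsOpen V ∧ V.Nonempty ∧
      Set.EqOn (fun x => M *ᵥ (sᶜ.indicator x - q) ⬝ᵥ s.indicator x) 0 V := by
  obtain ⟨x₀, hx₀U, hx₀⟩ := hne
  refine ⟨{x | s.indicator x ⬝ᵥ s.indicator x ≠ 0} ∩ cylinderRetract s ⁻¹' U,
    (continuousOn_cylinderRetract s).isOpen_inter_preimage ?_ hU, ⟨x₀, ?_, ?_⟩, ?_⟩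
  · have hz := continuous_indicator_self s
    exact isOpen_ne_fun (hz.dotProduct hz) continuous_const
  · show s.indicator x₀ ⬝ᵥ s.indicator x₀ ≠ 0
    rw [hx₀.out]
    exact one_ne_zero
  · rw [Set.mem_preimage, cylinderRetract_of_mem s hx₀]
    exact hx₀U
  · rintro x ⟨hx, hxU⟩
    have h := htangent _ ⟨hxU, cylinderRetract_mem_cylinder s hx⟩
    rw [mulVec_sub_dotProduct_indicator_of_transpose_eq_neg hM, compl_indicator_cylinderRetract,
      indicator_cylinderRetract, dotProduct_smul, smul_eq_mul] at h
    exact (mul_eq_zero.mp h).resolve_left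
      (inv_ne_zero ((Real.sqrt_ne_zero (dotProduct_self_nonneg _)).mpr hx))

theorem mulVec_compl_indicator_apply_eq_zero {i : ι} (hi : ∀ l ∉ s, M i l = 0) (x : ι → ℝ) :
    (M *ᵥ sᶜ.indicator x) i = 0 :=
  Finset.sum_eq_zero fun l _ => by
    by_cases hl : l ∈ s
    · simp [hl]
    · simp [hi l hl]

variable [DecidableEq ι] {V : Set (ι → ℝ)}

theorem mulVec_compl_indicator_sub_apply_eq_zero_of_eqOn_zero (hV : IsOpen V)
    (hg : Set.EqOn (fun x => M *ᵥ (sᶜ.indicator x - q) ⬝ᵥ s.indicator x) 0 V)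
    {x : ι → ℝ} (hx : x ∈ V) {i : ι} (hi : i ∈ s) : (M *ᵥ (sᶜ.indicator x - q)) i = 0 :=
  hV.slope_eq_zero_of_eqOn_zero hg hx (Pi.single i 1) fun t => by
    rw [indicator_add_smul_single_of_notMem (Set.notMem_compl_iff.mpr hi),
      indicator_add_smul_single_of_mem hi, dotProduct_add, dotProduct_smul, dotProduct_single,
      mul_one, smul_eq_mul]

theorem entry_eq_zero_of_eqOn_zero (hV : IsOpen V) {i : ι}
    (hg : Set.EqOn (fun x => (M *ᵥ (sᶜ.indicator x - q)) i) 0 V)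
    {x : ι → ℝ} (hx : x ∈ V) {l : ι} (hl : l ∉ s) : M i l = 0 :=
  hV.slope_eq_zero_of_eqOn_zero hg hx (Pi.single l 1) fun t => by
    rw [indicator_add_smul_single_of_mem (Set.mem_compl hl), add_sub_right_comm, mulVec_add,
      mulVec_smul, mulVec_single_one]
    simp

theorem block_structure_of_tangent_cylinder (hM : Mᵀ = -M) {U : Set (ι → ℝ)} (hU : IsOpen U)
    (hne : (U ∩ cylinder s).Nonempty)
    (htangent : ∀ x ∈ U ∩ cylinder s, M *ᵥ (x - q) ⬝ᵥ s.indicator x = 0) :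
    (∀ i ∈ s, ∀ l ∉ s, M i l = 0) ∧ ∀ i ∈ s, (M *ᵥ q) i = 0 := by
  obtain ⟨V, hV, ⟨x₀, hx₀⟩, hg⟩ := exists_isOpen_eqOn_zero_of_tangent s q hM hU hne htangent
  have hcoeff : ∀ i ∈ s, Set.EqOn (fun x => (M *ᵥ (sᶜ.indicator x - q)) i) 0 V :=
    fun i hi x hx => mulVec_compl_indicator_sub_apply_eq_zero_of_eqOn_zero s q hV hg hx hi
  have hblock : ∀ i ∈ s, ∀ l ∉ s, M i l = 0 :=
    fun i hi l hl => entry_eq_zero_of_eqOn_zero s q hV (hcoeff i hi) hx₀ hl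
  refine ⟨hblock, fun i hi => ?_⟩
  have h : (M *ᵥ (sᶜ.indicator x₀ - q)) i = 0 := hcoeff i hi hx₀
  rw [mulVec_sub] at h
  simpa [mulVec_compl_indicator_apply_eq_zero s (hblock i hi)] using h

end Cylinder

theorem cylinder_tangent_rotation_block_structure_general
    (n k : ℕ)
    (M : Matrix (Fin (n + 1)) (Fin (n + 1)) ℝ) (hM : Mᵀ = -M)
    (q : Fin (n + 1) → ℝ)
    (U : Set (Fin (n + 1) → ℝ)) (hUopen : IsOpen U)
    (hne : (U ∩ {x | (∑ i : Fin (n + 1), if k ≤ (i : ℕ) then x i ^ 2 else 0) = 1}).Nonempty)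
    (htangent : ∀ x ∈ U,
      (∑ i : Fin (n + 1), if k ≤ (i : ℕ) then x i ^ 2 else 0) = 1 →
      (∑ i : Fin (n + 1), if k ≤ (i : ℕ) then M.mulVec (x - q) i * x i else 0) = 0) :
    (∀ i l : Fin (n + 1), k ≤ (i : ℕ) → (l : ℕ) < k → M i l = 0) ∧
    (∀ i : Fin (n + 1), k ≤ (i : ℕ) → M.mulVec q i = 0) := by
  set s : Set (Fin (n + 1)) := {i | k ≤ (i : ℕ)}
  have hnorm : ∀ x : Fin (n + 1) → ℝ,
      (∑ i : Fin (n + 1), if k ≤ (i : ℕ) then x i ^ 2 else 0) = s.indicator x ⬝ᵥ s.indicator x :=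
    fun x => Finset.sum_congr rfl fun i _ => by
      by_cases hi : k ≤ (i : ℕ) <;> simp [s, hi, sq]
  have hform : ∀ x : Fin (n + 1) → ℝ,
      (∑ i : Fin (n + 1), if k ≤ (i : ℕ) then M.mulVec (x - q) i * x i else 0) =
        M *ᵥ (x - q) ⬝ᵥ s.indicator x :=
    fun x => Finset.sum_congr rfl fun i _ => by
      by_cases hi : k ≤ (i : ℕ) <;> simp [s, hi]
  simp only [hnorm, hform] at hne htangent
  obtain ⟨hblock, hMq⟩ := block_structure_of_tangent_cylinder s q hM hUopen hne
    fun x hx => htangent x hx.1 hx.2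
  exact ⟨fun i l hi hl => hblock i hi l (not_le.mpr hl), hMq⟩

/-- **Block structure of rotation fields tangent to a cylinder** (key computation in the
proof of Lemma A.1). If `M ∈ so(n+1)` and `q ∈ ℝ^{n+1}` are such that
`⟨M(x - q), ν(x)⟩ = 0` on a nonempty open subset of the unit-radius cylinder
`Γ = {x : Σ_{i ≥ k} xᵢ² = 1}` (with outward normal `ν(x)ᵢ = xᵢ` for `i ≥ k`, `0` else) —
an open subset of `Γ` being realized as `U ∩ Γ` for an ambient open set `U` — then the
off-diagonal blocks `M_{il}` (`i ≥ k`, `l < k`) vanish and `(Mq)ᵢ = 0` for `i ≥ k`. -/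
theorem cylinder_tangent_rotation_block_structure
    (n k : ℕ) (hk : 1 ≤ k) (hkn : k < n)
    (M : Matrix (Fin (n + 1)) (Fin (n + 1)) ℝ) (hM : Mᵀ = -M)
    (q : Fin (n + 1) → ℝ)
    (U : Set (Fin (n + 1) → ℝ)) (hUopen : IsOpen U)
    (hne : (U ∩ {x | (∑ i : Fin (n + 1), if k ≤ (i : ℕ) then x i ^ 2 else 0) = 1}).Nonempty)
    (htangent : ∀ x ∈ U,
      (∑ i : Fin (n + 1), if k ≤ (i : ℕ) then x i ^ 2 else 0) = 1 →
      (∑ i : Fin (n + 1), if k ≤ (i : ℕ) then M.mulVec (x - q) i * x i else 0) = 0) :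
    (∀ i l : Fin (n + 1), k ≤ (i : ℕ) → (l : ℕ) < k → M i l = 0) ∧
    (∀ i : Fin (n + 1), k ≤ (i : ℕ) → M.mulVec q i = 0) :=
  cylinder_tangent_rotation_block_structure_general n k M hM q U hUopen hne htangent
end

section
/- Two-sided bound for shrinker-type profile functions with prescribed asymptotic slope: Let m ≥ 1 be a real number, let L ≥ 2√2 and b > 0, and let u : [L, ∞) → ℝ be a differentiable function with u(r)² > 2m for all r ≥ L, satisfying the differential equation d/dr[u(r)²] = (w(r)/r)(u(r)² − 2m) for some function w : [L,∞) → ℝ with 2 ≤ w(r) ≤ 2 + 16/r² for all r, and with asymptotic slope lim_{r→∞} u(r)/r = b. Then for all r ≥ L: 2m + e⁻¹ b² r² ≤ u(r)² ≤ 2m + b² r². -/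
/-!
Put `F(r) = (u(r)² - 2m) / r²`. The equation gives `F' = F · (w - 2) / r`, so
`0 ≤ (log F)' ≤ 16 / r³ = -(8 / r²)'`: hence `F` is nondecreasing and `F · exp (8 / r²)` is
nonincreasing on `[L, ∞)`. Both tend to `b²`, so `b² e^{-8/r²} ≤ F(r) ≤ b²`, and
`8 / r² ≤ 1` for `r ≥ 2√2`.
-/

open Filter Set Topology Real

theorem MonotoneOn.le_of_tendsto_atTop {α β : Type*} [TopologicalSpace α] [Preorder α]
    [OrderClosedTopology α] [LinearOrder β] [Nonempty β] {f : β → α} {a : β} {l : α}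
    (hf : MonotoneOn f (Ici a)) (hl : Tendsto f atTop (𝓝 l)) {x : β} (hx : a ≤ x) :
    f x ≤ l :=
  ge_of_tendsto hl <| (eventually_ge_atTop x).mono fun _ hy => hf hx (hx.trans hy) hy

theorem AntitoneOn.ge_of_tendsto_atTop {α β : Type*} [TopologicalSpace α] [Preorder α]
    [OrderClosedTopology α] [LinearOrder β] [Nonempty β] {f : β → α} {a : β} {l : α}
    (hf : AntitoneOn f (Ici a)) (hl : Tendsto f atTop (𝓝 l)) {x : β} (hx : a ≤ x) :
    l ≤ f x :=
  le_of_tendsto hl <| (eventually_ge_atTop x).mono fun _ hy => hf hx (hx.trans hy) hy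

theorem monotoneOn_of_hasDerivWithinAt_nonneg_of_forall {D : Set ℝ} (hD : Convex ℝ D)
    {f f' : ℝ → ℝ} (hf : ∀ x ∈ D, HasDerivWithinAt f (f' x) D x) (hf' : ∀ x ∈ D, 0 ≤ f' x) :
    MonotoneOn f D :=
  monotoneOn_of_hasDerivWithinAt_nonneg hD (fun x hx => (hf x hx).continuousWithinAt)
    (fun x hx => (hf x (interior_subset hx)).mono interior_subset)
    (fun x hx => hf' x (interior_subset hx))

theorem antitoneOn_mul_exp_of_hasDerivWithinAt {D : Set ℝ} (hD : Convex ℝ D)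
    {f f' φ φ' : ℝ → ℝ} (hf : ∀ x ∈ D, HasDerivWithinAt f (f' x) D x)
    (hφ : ∀ x ∈ D, HasDerivWithinAt φ (φ' x) D x) (hle : ∀ x ∈ D, f' x + φ' x * f x ≤ 0) :
    AntitoneOn (fun x => f x * exp (φ x)) D := by
  have hderiv : ∀ x ∈ D, HasDerivWithinAt (fun x => f x * exp (φ x))
      ((f' x + φ' x * f x) * exp (φ x)) D x := fun x hx =>
    ((hf x hx).fun_mul (hφ x hx).exp).congr_deriv (by ring)
  exact antitoneOn_of_hasDerivWithinAt_nonpos hD (fun x hx => (hderiv x hx).continuousWithinAt)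
    (fun x hx => (hderiv x (interior_subset hx)).mono interior_subset)
    (fun x hx => mul_nonpos_of_nonpos_of_nonneg (hle x (interior_subset hx)) (exp_pos _).le)

theorem HasDerivWithinAt.sub_div_sq {v : ℝ → ℝ} {c w x : ℝ} {s : Set ℝ}
    (hv : HasDerivWithinAt v (w / x * (v x - c)) s x) (hx : x ≠ 0) :
    HasDerivWithinAt (fun y => (v y - c) / y ^ 2) ((v x - c) / x ^ 2 * ((w - 2) / x)) s x := by
  refine ((hv.sub_const c).fun_div (hasDerivAt_pow 2 x).hasDerivWithinAt
    (pow_ne_zero 2 hx)).congr_deriv ?_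
  field_simp
  ring

theorem hasDerivAt_const_div_sq {a x : ℝ} (hx : x ≠ 0) :
    HasDerivAt (fun y => a / y ^ 2) (-(2 * a / x ^ 3)) x := by
  refine ((hasDerivAt_const x a).fun_div (hasDerivAt_pow 2 x) (pow_ne_zero 2 hx)).congr_deriv ?_
  field_simp
  ring

theorem tendsto_sq_sub_div_sq {u : ℝ → ℝ} {b : ℝ} (c : ℝ)
    (hu : Tendsto (fun r => u r / r) atTop (𝓝 b)) :
    Tendsto (fun r => (u r ^ 2 - c) / r ^ 2) atTop (𝓝 (b ^ 2)) := by
  have hc : Tendsto (fun r : ℝ => c / r ^ 2) atTop (𝓝 0) :=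
    tendsto_const_nhds.div_atTop (tendsto_pow_atTop two_ne_zero)
  refine ((hu.pow 2).sub hc).congr' ?_ |>.trans (by rw [sub_zero])
  filter_upwards [eventually_ne_atTop 0] with r hr
  field_simp

section ProfileODE

variable {v w : ℝ → ℝ} {c L : ℝ}

theorem monotoneOn_sub_div_sq_of_ode (hL : 0 < L)
    (hv : ∀ r ∈ Ici L, HasDerivWithinAt v (w r / r * (v r - c)) (Ici L) r)
    (hc : ∀ r ∈ Ici L, c < v r) (hw : ∀ r ∈ Ici L, 2 ≤ w r) :
    MonotoneOn (fun r => (v r - c) / r ^ 2) (Ici L) := by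
  refine monotoneOn_of_hasDerivWithinAt_nonneg_of_forall (convex_Ici L)
    (fun r hr => (hv r hr).sub_div_sq (hL.trans_le hr).ne') fun r hr => ?_
  have hr0 : 0 < r := hL.trans_le hr
  have h1 := sub_pos.2 (hc r hr)
  have h2 := sub_nonneg.2 (hw r hr)
  positivity

theorem antitoneOn_sub_div_sq_mul_exp_of_ode (hL : 0 < L)
    (hv : ∀ r ∈ Ici L, HasDerivWithinAt v (w r / r * (v r - c)) (Ici L) r)
    (hc : ∀ r ∈ Ici L, c < v r) (hw : ∀ r ∈ Ici L, w r ≤ 2 + 16 / r ^ 2) :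
    AntitoneOn (fun r => (v r - c) / r ^ 2 * exp (8 / r ^ 2)) (Ici L) := by
  refine antitoneOn_mul_exp_of_hasDerivWithinAt (convex_Ici L)
    (fun r hr => (hv r hr).sub_div_sq (hL.trans_le hr).ne')
    (fun r hr => (hasDerivAt_const_div_sq (hL.trans_le hr).ne').hasDerivWithinAt)
    fun r hr => ?_
  have hr0 : 0 < r := hL.trans_le hr
  have hF : 0 ≤ (v r - c) / r ^ 2 := by have := sub_pos.2 (hc r hr); positivity
  have hslope : (w r - 2) / r ≤ 16 / r ^ 3 := by
    rw [div_le_iff₀ hr0]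
    calc w r - 2 ≤ 16 / r ^ 2 := by linarith [hw r hr]
      _ = 16 / r ^ 3 * r := by field_simp
  nlinarith [mul_le_mul_of_nonneg_left hslope hF]

end ProfileODE

theorem shrinker_profile_two_sided_bound_general
    (m : ℝ) (L b : ℝ) (hL : 2 * Real.sqrt 2 ≤ L)
    (u w : ℝ → ℝ)
    (hularge : ∀ r ∈ Set.Ici L, 2 * m < u r ^ 2)
    (hode : ∀ r ∈ Set.Ici L,
      HasDerivWithinAt (fun s => u s ^ 2) (w r / r * (u r ^ 2 - 2 * m)) (Set.Ici L) r)
    (hw1 : ∀ r ∈ Set.Ici L, 2 ≤ w r)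
    (hw2 : ∀ r ∈ Set.Ici L, w r ≤ 2 + 16 / r ^ 2)
    (hslope : Filter.Tendsto (fun r => u r / r) Filter.atTop (nhds b)) :
    ∀ r ∈ Set.Ici L,
      2 * m + (Real.exp 1)⁻¹ * b ^ 2 * r ^ 2 ≤ u r ^ 2 ∧
      u r ^ 2 ≤ 2 * m + b ^ 2 * r ^ 2 := by
  intro r hr
  have hL0 : 0 < L := lt_of_lt_of_le (by positivity) hL
  have hr0 : 0 < r := hL0.trans_le hr
  have hr8 : 8 ≤ r ^ 2 := by
    nlinarith [sq_sqrt (zero_le_two : (0 : ℝ) ≤ 2), sqrt_nonneg 2, mem_Ici.1 hr]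
  have hF := tendsto_sq_sub_div_sq (2 * m) hslope
  have hupper : (u r ^ 2 - 2 * m) / r ^ 2 ≤ b ^ 2 :=
    (monotoneOn_sub_div_sq_of_ode hL0 hode hularge hw1).le_of_tendsto_atTop hF hr
  have hexp : Tendsto (fun s : ℝ => exp (8 / s ^ 2)) atTop (𝓝 1) := by
    simpa [Function.comp_def] using (continuous_exp.tendsto 0).comp
      (tendsto_const_nhds.div_atTop (tendsto_pow_atTop two_ne_zero))
  have hlower : b ^ 2 ≤ (u r ^ 2 - 2 * m) / r ^ 2 * exp (8 / r ^ 2) :=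
    (antitoneOn_sub_div_sq_mul_exp_of_ode hL0 hode hularge hw2).ge_of_tendsto_atTop
      (by simpa using hF.mul hexp) hr
  have hexp_le : exp (8 / r ^ 2) ≤ exp 1 :=
    exp_le_exp.2 ((div_le_one (by positivity)).2 hr8)
  have hpos : 0 ≤ (u r ^ 2 - 2 * m) / r ^ 2 := by
    have := sub_pos.2 (hularge r hr); positivity
  have hb : b ^ 2 ≤ (u r ^ 2 - 2 * m) / r ^ 2 * exp 1 :=
    hlower.trans (mul_le_mul_of_nonneg_left hexp_le hpos)
  rw [div_le_iff₀ (by positivity)] at hupper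
  rw [← div_le_iff₀ (exp_pos 1), le_div_iff₀ (by positivity)] at hb
  rw [inv_mul_eq_div]
  constructor <;> linarith

/-- **Two-sided bound for shrinker-type profile functions with prescribed asymptotic
slope** (estimate for the profile of the Kleene–Møller shrinker, from the barrier-estimate
Claim in Proposition 2.3, with `m = n - k`). If `u` is differentiable on `[L, ∞)` with
`u² > 2m`, satisfies `d/dr[u²] = (w(r)/r)(u² - 2m)` with `2 ≤ w(r) ≤ 2 + 16/r²`, and has
asymptotic slope `u(r)/r → b > 0`, then `2m + e⁻¹b²r² ≤ u(r)² ≤ 2m + b²r²` on `[L, ∞)`. -/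
theorem shrinker_profile_two_sided_bound
    (m : ℝ) (hm : 1 ≤ m) (L b : ℝ) (hL : 2 * Real.sqrt 2 ≤ L) (hb : 0 < b)
    (u w : ℝ → ℝ)
    (hdiff : ∀ r ∈ Set.Ici L, DifferentiableWithinAt ℝ u (Set.Ici L) r)
    (hularge : ∀ r ∈ Set.Ici L, 2 * m < u r ^ 2)
    (hode : ∀ r ∈ Set.Ici L,
      HasDerivWithinAt (fun s => u s ^ 2) (w r / r * (u r ^ 2 - 2 * m)) (Set.Ici L) r)
    (hw1 : ∀ r ∈ Set.Ici L, 2 ≤ w r)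
    (hw2 : ∀ r ∈ Set.Ici L, w r ≤ 2 + 16 / r ^ 2)
    (hslope : Filter.Tendsto (fun r => u r / r) Filter.atTop (nhds b)) :
    ∀ r ∈ Set.Ici L,
      2 * m + (Real.exp 1)⁻¹ * b ^ 2 * r ^ 2 ≤ u r ^ 2 ∧
      u r ^ 2 ≤ 2 * m + b ^ 2 * r ^ 2 :=
  shrinker_profile_two_sided_bound_general m L b hL u w hularge hode hw1 hw2 hslope
end
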